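/- arXiv:2006.08237 — 9 statements merged into one kernel-verified Lean document; each statement's English description precedes it below -/
import Mathlib

section
/- Let h>0, a∈ℝ, ν∈(0,1], and let x,y:(hℕ)_a→ℝ. If (_aΔ_{h,*}^ν x)(t) ≥ (_aΔ_{h,*}^ν y)(t) for all t∈(hℕ)_{a+(1−ν)h}, then x(t)−y(t) ≥ x(a)−y(a) for all t∈(hℕ)_a. -/
open Finset Filter Matrix

/-- The `h`-factorial function `t_h^(ν) = h^ν Γ(t/h+1)/Γ(t/h+1-ν)`. -/
noncomputable def hfact (h t ν : ℝ) : ℝ :=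
  h ^ ν * Real.Gamma (t / h + 1) / Real.Gamma (t / h + 1 - ν)

/-- The forward `h`-difference operator. -/
noncomputable def fdiff (h : ℝ) (y : ℝ → ℝ) (t : ℝ) : ℝ := (y (t + h) - y t) / h

/-- The Caputo-like `h`-difference of order `ν ∈ (0,1]` of `y : (hℕ)_a → ℝ`,
evaluated at the grid point `t = a + (1-ν)h + k·h` of `(hℕ)_{a+(1-ν)h}`. -/
noncomputable def caputoD (h a ν : ℝ) (y : ℝ → ℝ) (k : ℕ) : ℝ :=
  if ν = 1 then fdiff h y (a + (k : ℝ) * h)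
  else (h / Real.Gamma (1 - ν)) *
    ∑ j ∈ Finset.range (k + 1),
      hfact h (a + (1 - ν) * h + (k : ℝ) * h - (a + (j : ℝ) * h + h)) (-ν) *
        fdiff h y (a + (j : ℝ) * h)

lemma caputoD_sub (h a ν : ℝ) (x y : ℝ → ℝ) (k : ℕ) :
    caputoD h a ν (fun t => x t - y t) k = caputoD h a ν x k - caputoD h a ν y k := by
  unfold caputoD fdiff
  split_ifs
  · ring
  · rw [← mul_sub, ← Finset.sum_sub_distrib]
    congr 1
    apply Finset.sum_congr rfl
    intro j _
    ring

theorem stmt0 (h a ν : ℝ) (hh : 0 < h) (hν0 : 0 < ν) (hν1 : ν ≤ 1)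
    (x y : ℝ → ℝ)
    (hxy : ∀ k : ℕ, caputoD h a ν x k ≥ caputoD h a ν y k) :
    ∀ k : ℕ, x (a + (k : ℝ) * h) - y (a + (k : ℝ) * h) ≥ x a - y a := by
  set z : ℝ → ℝ := fun t => x t - y t with hzdef
  have hzc : ∀ n : ℕ, 0 ≤ caputoD h a ν z n := by
    intro n
    rw [hzdef, caputoD_sub]
    have := hxy n
    linarith
  have key : ∀ n : ℕ, z a ≤ z (a + (n : ℝ) * h) := by
    rcases eq_or_lt_of_le hν1 with hν | hν
    · -- ν = 1
      intro n
      induction n with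
      | zero => simp
      | succ m ih =>
        have h0 := hzc m
        rw [caputoD, if_pos hν] at h0
        unfold fdiff at h0
        have h1 : (0 : ℝ) * h ≤ z (a + (m : ℝ) * h + h) - z (a + (m : ℝ) * h) :=
          (le_div_iff₀ hh).mp h0
        have h2 : a + ((m + 1 : ℕ) : ℝ) * h = a + (m : ℝ) * h + h := by push_cast; ring
        rw [h2]
        nlinarith
    · -- ν < 1
      have hν' : ν ≠ 1 := ne_of_lt hν
      set c : ℕ → ℝ := fun m => Real.Gamma ((m : ℝ) + 1 - ν) / Real.Gamma ((m : ℝ) + 1)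
        with hc
      have cpos : ∀ m : ℕ, 0 < c m := by
        intro m
        apply div_pos
        · apply Real.Gamma_pos_of_pos
          have : (0 : ℝ) ≤ (m : ℝ) := Nat.cast_nonneg m
          linarith
        · apply Real.Gamma_pos_of_pos
          positivity
      have cdec : ∀ m : ℕ, c (m + 1) ≤ c m := by
        intro m
        have hm0 : (0 : ℝ) ≤ (m : ℝ) := Nat.cast_nonneg m
        have hg1 : 0 < Real.Gamma ((m : ℝ) + 1 - ν) :=
          Real.Gamma_pos_of_pos (by linarith)
        have hg2 : 0 < Real.Gamma ((m : ℝ) + 1) := Real.Gamma_pos_of_pos (by positivity)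
        have e1 : Real.Gamma (((m + 1 : ℕ) : ℝ) + 1 - ν)
            = ((m : ℝ) + 1 - ν) * Real.Gamma ((m : ℝ) + 1 - ν) := by
          have := Real.Gamma_add_one (show (m : ℝ) + 1 - ν ≠ 0 by intro hx; nlinarith)
          rw [show ((m + 1 : ℕ) : ℝ) + 1 - ν = ((m : ℝ) + 1 - ν) + 1 by push_cast; ring]
          exact this
        have e2 : Real.Gamma (((m + 1 : ℕ) : ℝ) + 1)
            = ((m : ℝ) + 1) * Real.Gamma ((m : ℝ) + 1) := by
          have := Real.Gamma_add_one (show (m : ℝ) + 1 ≠ 0 by positivity)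
          rw [show ((m + 1 : ℕ) : ℝ) + 1 = ((m : ℝ) + 1) + 1 by push_cast; ring]
          exact this
        rw [hc]
        simp only
        rw [e1, e2, div_le_div_iff₀ (by positivity) hg2]
        nlinarith [mul_pos hg1 hg2, hν0]
      set v : ℕ → ℝ := fun n => z (a + (n : ℝ) * h) - z a with hv
      have v0 : v 0 = 0 := by simp [hv]
      have S_nonneg : ∀ n : ℕ,
          0 ≤ ∑ j ∈ Finset.range (n + 1), c (n - j) * (v (j + 1) - v j) := by
        intro n
        have h0 := hzc n
        rw [caputoD, if_neg hν'] at h0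
        have hsum : ∑ j ∈ Finset.range (n + 1),
            hfact h (a + (1 - ν) * h + (n : ℝ) * h - (a + (j : ℝ) * h + h)) (-ν) *
              fdiff h z (a + (j : ℝ) * h)
            = (h ^ (-ν : ℝ) / h) *
              ∑ j ∈ Finset.range (n + 1), c (n - j) * (v (j + 1) - v j) := by
          rw [Finset.mul_sum]
          apply Finset.sum_congr rfl
          intro j hj
          have hjn : j ≤ n := Nat.lt_succ_iff.mp (Finset.mem_range.mp hj)
          have harg : a + (1 - ν) * h + (n : ℝ) * h - (a + (j : ℝ) * h + h)
              = ((n : ℝ) - (j : ℝ) - ν) * h := by ring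
          have hf : hfact h (((n : ℝ) - (j : ℝ) - ν) * h) (-ν)
              = h ^ (-ν : ℝ) * c (n - j) := by
            unfold hfact
            rw [mul_div_cancel_right₀ _ (ne_of_gt hh)]
            rw [show (n : ℝ) - (j : ℝ) - ν + 1 = ((n - j : ℕ) : ℝ) + 1 - ν by
                  rw [Nat.cast_sub hjn]; ring,
                show ((n - j : ℕ) : ℝ) + 1 - ν - (-ν) = ((n - j : ℕ) : ℝ) + 1 by ring,
                mul_div_assoc]
          have hfd : fdiff h z (a + (j : ℝ) * h) = (v (j + 1) - v j) / h := by
            unfold fdiff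
            rw [show a + (j : ℝ) * h + h = a + ((j + 1 : ℕ) : ℝ) * h by push_cast; ring]
            simp only [hv]
            ring
          rw [harg, hf, hfd]
          ring
        rw [hsum] at h0
        have hΓ : 0 < Real.Gamma (1 - ν) := Real.Gamma_pos_of_pos (by linarith)
        have hpow : 0 < h ^ (-ν : ℝ) := Real.rpow_pos_of_pos hh _
        by_contra hS
        push_neg at hS
        have hC : 0 < h / Real.Gamma (1 - ν) * (h ^ (-ν : ℝ) / h) := by positivity
        nlinarith
      have main : ∀ n : ℕ, 0 ≤ v n := by
        intro n
        induction n using Nat.strong_induction_on with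
        | _ n ih =>
          match n with
          | 0 => rw [v0]
          | Nat.succ m =>
            have hS := S_nonneg m
            have e1 : ∑ j ∈ Finset.range (m + 1), c (m - j) * (v (j + 1) - v j)
                = (∑ j ∈ Finset.range m, c (m - j) * v (j + 1) + c 0 * v (m + 1))
                  - (∑ j ∈ Finset.range m, c (m - (j + 1)) * v (j + 1) + c m * v 0) := by
              rw [show (∑ j ∈ Finset.range (m + 1), c (m - j) * (v (j + 1) - v j))
                    = (∑ j ∈ Finset.range (m + 1), c (m - j) * v (j + 1))
                      - ∑ j ∈ Finset.range (m + 1), c (m - j) * v j from by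
                  rw [← Finset.sum_sub_distrib]
                  apply Finset.sum_congr rfl
                  intro j _
                  ring]
              rw [Finset.sum_range_succ (fun j => c (m - j) * v (j + 1)) m]
              rw [Finset.sum_range_succ' (fun j => c (m - j) * v j) m]
              simp [Nat.sub_self]
            have hterm : ∀ j ∈ Finset.range m,
                0 ≤ (c (m - (j + 1)) - c (m - j)) * v (j + 1) := by
              intro j hj
              have hjm : j < m := Finset.mem_range.mp hj
              have e : m - j = (m - (j + 1)) + 1 := by omega
              have hd := cdec (m - (j + 1))
              rw [← e] at hd
              exact mul_nonneg (by linarith) (ih (j + 1) (by omega))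
            have hsum2 : 0 ≤ ∑ j ∈ Finset.range m, (c (m - (j + 1)) - c (m - j)) * v (j + 1) :=
              Finset.sum_nonneg hterm
            have hsplit : ∑ j ∈ Finset.range m, (c (m - (j + 1)) - c (m - j)) * v (j + 1)
                = ∑ j ∈ Finset.range m, c (m - (j + 1)) * v (j + 1)
                  - ∑ j ∈ Finset.range m, c (m - j) * v (j + 1) := by
              rw [← Finset.sum_sub_distrib]
              apply Finset.sum_congr rfl
              intro j _
              ring
            have hpos : 0 ≤ c 0 * v (m + 1) := by
              rw [e1] at hS
              rw [hsplit] at hsum2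
              rw [v0] at hS
              linarith
            have := cpos 0
            nlinarith
      intro n
      have := main n
      simp only [hv] at this
      linarith
  intro k
  have := key k
  simp only [hzdef] at this
  linarith
end

section
/- Let h>0, a∈ℝ, ν∈(0,1], n∈ℕ with n≥1, let P∈ℝ^{n×n} be a symmetric positive definite matrix, and let y:(hℕ)_a→ℝⁿ. Then (1/2)·(_aΔ_{h,*}^ν (yᵀPy))(t) ≤ y(t+νh)ᵀ·P·(_aΔ_{h,*}^ν y)(t) for all t∈(hℕ)_{a+(1−ν)h}. -/
/-!
Write `X j = y (a + j h)` and `Q x = xᵀ P x`. For `ν < 1` the Caputo difference of `f` at the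
`k`-th grid point is `Γ(1-ν)⁻¹ ∑_{j ≤ k} c j (f (a + (j+1) h) - f (a + j h))` with kernel weights
`c j = ((k - j - ν) h)_h^(-ν)`, which are positive and nondecreasing in `j`, because `Γ(m + 1 - ν) / Γ(m + 1)` decreases in `m`.
With `u = X (k+1)`, the polarization identity
`2 uᵀP(q - p) - (Q q - Q p) = Q (u - p) - Q (u - q)` turns the difference of the two sides into
`∑ c j (V j - V (j+1))` with `V j = Q (X (k+1) - X j) ≥ 0` and `V (k+1) = 0`; summation by parts
against nondecreasing nonnegative weights shows that this is nonnegative. For `ν = 1` only the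
single term `j = k` remains.
-/

open Finset Filter Matrix

section SummationByParts

variable {R : Type*} [CommRing R] [PartialOrder R] [IsOrderedRing R]

theorem sum_mul_sub_succ_add_nonneg {c V : ℕ → R} {k : ℕ} (hc₀ : 0 ≤ c 0)
    (hc : ∀ j < k, c j ≤ c (j + 1)) (hV : ∀ j, 0 ≤ V j) :
    0 ≤ ∑ j ∈ range (k + 1), c j * (V j - V (j + 1)) + c k * V (k + 1) := by
  induction k with
  | zero => simpa [mul_sub] using mul_nonneg hc₀ (hV 0)
  | succ k ih =>
    have hstep : 0 ≤ (c (k + 1) - c k) * V (k + 1) :=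
      mul_nonneg (sub_nonneg.2 (hc k k.lt_succ_self)) (hV _)
    calc (0 : R) ≤ (∑ j ∈ range (k + 1), c j * (V j - V (j + 1)) + c k * V (k + 1))
          + (c (k + 1) - c k) * V (k + 1) :=
          add_nonneg (ih fun j hj => hc j (hj.trans k.lt_succ_self)) hstep
      _ = _ := by rw [sum_range_succ _ (k + 1)]; ring

theorem sum_mul_sub_succ_nonneg {c V : ℕ → R} {k : ℕ} (hc₀ : 0 ≤ c 0)
    (hc : ∀ j < k, c j ≤ c (j + 1)) (hV : ∀ j, 0 ≤ V j) (hVk : V (k + 1) = 0) :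
    0 ≤ ∑ j ∈ range (k + 1), c j * (V j - V (j + 1)) := by
  simpa [hVk] using sum_mul_sub_succ_add_nonneg hc₀ hc hV

end SummationByParts

section QuadraticForm

variable {ι : Type*}

theorem Matrix.PosSemidef.isSymm {P : Matrix ι ι ℝ} (hP : P.PosSemidef) : P.IsSymm :=
  isHermitian_iff_isSymm.1 hP.isHermitian

variable [Fintype ι]

theorem Matrix.IsSymm.dotProduct_mulVec_comm {R : Type*} [CommSemiring R] {P : Matrix ι ι R}
    (hP : P.IsSymm) (x z : ι → R) : x ⬝ᵥ P *ᵥ z = z ⬝ᵥ P *ᵥ x := by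
  rw [dotProduct_mulVec, ← mulVec_transpose, hP.eq, dotProduct_comm]

theorem Matrix.IsSymm.two_mul_dotProduct_mulVec_sub {R : Type*} [CommRing R]
    {P : Matrix ι ι R} (hP : P.IsSymm) (u p q : ι → R) :
    2 * (u ⬝ᵥ P *ᵥ (q - p)) - (q ⬝ᵥ P *ᵥ q - p ⬝ᵥ P *ᵥ p)
      = (u - p) ⬝ᵥ P *ᵥ (u - p) - (u - q) ⬝ᵥ P *ᵥ (u - q) := by
  have hp := hP.dotProduct_mulVec_comm u p
  have hq := hP.dotProduct_mulVec_comm u q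
  simp only [mulVec_sub, dotProduct_sub, sub_dotProduct]
  linear_combination hq - hp

variable {P : Matrix ι ι ℝ}

theorem Matrix.PosSemidef.dotProduct_mulVec_self_nonneg (hP : P.PosSemidef) (x : ι → ℝ) :
    0 ≤ x ⬝ᵥ P *ᵥ x := by
  simpa using hP.dotProduct_mulVec_nonneg x

theorem Matrix.PosSemidef.dotProduct_mulVec_self_sub_le (hP : P.PosSemidef) (p q : ι → ℝ) :
    q ⬝ᵥ P *ᵥ q - p ⬝ᵥ P *ᵥ p ≤ 2 * (q ⬝ᵥ P *ᵥ (q - p)) := by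
  have h := hP.isSymm.two_mul_dotProduct_mulVec_sub q p q
  simp only [sub_self, zero_dotProduct] at h
  linarith [hP.dotProduct_mulVec_self_nonneg (q - p)]

theorem Matrix.PosSemidef.sum_mul_dotProduct_mulVec_self_sub_le (hP : P.PosSemidef)
    {c : ℕ → ℝ} {k : ℕ} (hc₀ : 0 ≤ c 0) (hc : ∀ j < k, c j ≤ c (j + 1)) (X : ℕ → ι → ℝ) :
    ∑ j ∈ range (k + 1), c j * (X (j + 1) ⬝ᵥ P *ᵥ X (j + 1) - X j ⬝ᵥ P *ᵥ X j)
      ≤ 2 * (X (k + 1) ⬝ᵥ P *ᵥ ∑ j ∈ range (k + 1), c j • (X (j + 1) - X j)) := by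
  set V : ℕ → ℝ := fun j => (X (k + 1) - X j) ⬝ᵥ P *ᵥ (X (k + 1) - X j)
  have hdiff : 2 * (X (k + 1) ⬝ᵥ P *ᵥ ∑ j ∈ range (k + 1), c j • (X (j + 1) - X j))
      - ∑ j ∈ range (k + 1), c j * (X (j + 1) ⬝ᵥ P *ᵥ X (j + 1) - X j ⬝ᵥ P *ᵥ X j)
      = ∑ j ∈ range (k + 1), c j * (V j - V (j + 1)) := by
    simp only [mulVec_sum, dotProduct_sum, mulVec_smul, dotProduct_smul, smul_eq_mul, mul_sum,
      ← sum_sub_distrib]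
    refine sum_congr rfl fun j _ => ?_
    linear_combination c j * hP.isSymm.two_mul_dotProduct_mulVec_sub (X (k + 1)) (X j) (X (j + 1))
  have hVk : V (k + 1) = 0 := by simp [V]
  have := sum_mul_sub_succ_nonneg (V := V) hc₀ hc (fun j => hP.dotProduct_mulVec_self_nonneg _) hVk
  linarith

end QuadraticForm

section CaputoKernel

variable {h ν m : ℝ}

theorem hfact_sub_mul_neg (hh : h ≠ 0) :
    hfact h ((m - ν) * h) (-ν) = h ^ (-ν) * Real.Gamma (m - ν + 1) / Real.Gamma (m + 1) := by
  rw [hfact, mul_div_cancel_right₀ _ hh]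
  ring_nf

theorem hfact_sub_mul_neg_pos (hh : 0 < h) (hν : ν < 1) (hm : 0 ≤ m) :
    0 < hfact h ((m - ν) * h) (-ν) := by
  rw [hfact_sub_mul_neg hh.ne']
  have := Real.Gamma_pos_of_pos (by linarith : 0 < m - ν + 1)
  have := Real.Gamma_pos_of_pos (by linarith : 0 < m + 1)
  have := Real.rpow_pos_of_pos hh (-ν)
  positivity

theorem hfact_add_one_sub_mul_neg_le (hh : 0 < h) (hν₀ : 0 ≤ ν) (hν₁ : ν < 1) (hm : 0 ≤ m) :
    hfact h ((m + 1 - ν) * h) (-ν) ≤ hfact h ((m - ν) * h) (-ν) := by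
  have hpos := hfact_sub_mul_neg_pos hh hν₁ hm
  have hrec : hfact h ((m + 1 - ν) * h) (-ν)
      = (m + 1 - ν) / (m + 1) * hfact h ((m - ν) * h) (-ν) := by
    rw [hfact_sub_mul_neg hh.ne', hfact_sub_mul_neg hh.ne',
      Real.Gamma_add_one (by linarith : m + 1 - ν ≠ 0),
      Real.Gamma_add_one (by linarith : m + 1 ≠ 0),
      show m + 1 - ν = m - ν + 1 by ring]
    field_simp
  rw [hrec]
  exact mul_le_of_le_one_left hpos.le ((div_le_one (by linarith)).2 (by linarith))

theorem caputoD_eq_sum (hh : h ≠ 0) (hν : ν ≠ 1) (a : ℝ) (f : ℝ → ℝ) (k : ℕ) :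
    caputoD h a ν f k = (Real.Gamma (1 - ν))⁻¹ * ∑ j ∈ range (k + 1),
      hfact h (((k : ℝ) - j - ν) * h) (-ν) * (f (a + ((j + 1 : ℕ) : ℝ) * h) - f (a + j * h)) := by
  rw [caputoD, if_neg hν, mul_sum, mul_sum]
  refine sum_congr rfl fun j _ => ?_
  rw [fdiff, show a + (1 - ν) * h + k * h - (a + j * h + h) = (k - j - ν) * h by ring]
  push_cast
  field_simp
  ring_nf

theorem caputoD_one (a : ℝ) (f : ℝ → ℝ) (k : ℕ) :
    caputoD h a 1 f k = (f (a + ((k + 1 : ℕ) : ℝ) * h) - f (a + k * h)) / h := by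
  rw [caputoD, if_pos rfl, fdiff]
  push_cast
  ring_nf

end CaputoKernel

theorem stmt1_general {n : ℕ} (h a ν : ℝ) (hh : 0 < h) (hν0 : 0 < ν) (hν1 : ν ≤ 1)
    (P : Matrix (Fin n) (Fin n) ℝ) (hP : P.PosDef)
    (y : ℝ → Fin n → ℝ) :
    ∀ k : ℕ,
      (1 / 2) * caputoD h a ν (fun t => y t ⬝ᵥ P.mulVec (y t)) k
        ≤ y (a + ((k : ℝ) + 1) * h) ⬝ᵥ
            P.mulVec (fun i => caputoD h a ν (fun t => y t i) k) := by
  intro k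
  set X : ℕ → Fin n → ℝ := fun j => y (a + j * h)
  have hu : y (a + ((k : ℝ) + 1) * h) = X (k + 1) := by simp [X]
  rw [hu]
  rcases hν1.lt_or_eq with hν1 | rfl
  · set c : ℕ → ℝ := fun j => hfact h (((k : ℝ) - j - ν) * h) (-ν)
    have hvec : (fun i => caputoD h a ν (fun t => y t i) k)
        = (Real.Gamma (1 - ν))⁻¹ • ∑ j ∈ range (k + 1), c j • (X (j + 1) - X j) := by
      ext i
      simp [caputoD_eq_sum hh.ne' hν1.ne, Finset.sum_apply, X, c]
    rw [caputoD_eq_sum hh.ne' hν1.ne, hvec, mulVec_smul, dotProduct_smul, smul_eq_mul]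
    have hΓ : 0 ≤ (Real.Gamma (1 - ν))⁻¹ := inv_nonneg.2 (Real.Gamma_pos_of_pos (by linarith)).le
    have hc₀ : 0 ≤ c 0 := (hfact_sub_mul_neg_pos hh hν1 (by simp)).le
    have hc : ∀ j < k, c j ≤ c (j + 1) := fun j hj => by
      have hjk : (j : ℝ) + 1 ≤ k := by exact_mod_cast hj
      convert hfact_add_one_sub_mul_neg_le hh hν0.le hν1 (by linarith : 0 ≤ (k : ℝ) - j - 1)
        using 3 <;> push_cast <;> ring
    have key := hP.posSemidef.sum_mul_dotProduct_mulVec_self_sub_le hc₀ hc X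
    nlinarith [mul_le_mul_of_nonneg_left key hΓ]
  · have hvec : (fun i => caputoD h a 1 (fun t => y t i) k) = h⁻¹ • (X (k + 1) - X k) := by
      ext i
      simp [caputoD_one, X, div_eq_inv_mul]
    rw [caputoD_one, hvec, mulVec_smul, dotProduct_smul, smul_eq_mul]
    have key := hP.posSemidef.dotProduct_mulVec_self_sub_le (X k) (X (k + 1))
    rw [div_eq_inv_mul _ h]
    nlinarith [mul_le_mul_of_nonneg_left key (inv_nonneg.2 hh.le)]

theorem stmt1 {n : ℕ} (hn : 1 ≤ n) (h a ν : ℝ) (hh : 0 < h) (hν0 : 0 < ν) (hν1 : ν ≤ 1)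
    (P : Matrix (Fin n) (Fin n) ℝ) (hPsym : P.IsSymm) (hP : P.PosDef)
    (y : ℝ → Fin n → ℝ) :
    ∀ k : ℕ,
      (1 / 2) * caputoD h a ν (fun t => y t ⬝ᵥ P.mulVec (y t)) k
        ≤ y (a + ((k : ℝ) + 1) * h) ⬝ᵥ
            P.mulVec (fun i => caputoD h a ν (fun t => y t i) k) :=
  stmt1_general h a ν hh hν0 hν1 P hP y
end

section
/- Let x=0 be an equilibrium of the Caputo system, with ν∈(0,1]. Suppose there exist V:(hℕ)_a×ℝⁿ→ℝ and class-K functions γ₁, γ₂, γ₃ such that γ₁(‖z‖) ≤ V(t,z) ≤ γ₂(‖z‖) for all t∈(hℕ)_a and z∈ℝⁿ, and such that along every solution x of the system, (_aΔ_{h,*}^ν V)(t,x(t)) ≤ −γ₃(‖x(t+νh)‖) for all t∈(hℕ)_{a+(1−ν)h}. Then the equilibrium x=0 of the Caputo system is asymptotically stable. -/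
open Finset Filter Matrix

noncomputable def Kseq (μ : ℝ) (m : ℕ) : ℝ :=
  Real.Gamma (m + μ) / (Real.Gamma μ * Real.Gamma (m + 1))

/-- `x : (hℕ)_a → ℝⁿ` is a solution of the Caputo system
`(_aΔ_{h,*}^ν x)(t) = f(t, x(t+νh))` on `(hℕ)_{a+(1-ν)h}` (componentwise). -/
def IsCaputoSol {n : ℕ} (h a ν : ℝ) (f : ℝ → (Fin n → ℝ) → (Fin n → ℝ))
    (x : ℝ → Fin n → ℝ) : Prop :=
  ∀ (k : ℕ) (i : Fin n),
    caputoD h a ν (fun t => x t i) k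
      = f (a + (1 - ν) * h + (k : ℝ) * h) (x (a + ((k : ℝ) + 1) * h)) i

/-- A class-K function: continuous on `[0,∞)`, vanishing at `0`, strictly increasing,
and mapping `[0,∞)` into `[0,∞)`. -/
def IsClassK (γ : ℝ → ℝ) : Prop :=
  ContinuousOn γ (Set.Ici 0) ∧ γ 0 = 0 ∧ StrictMonoOn γ (Set.Ici 0) ∧
    ∀ r ∈ Set.Ici (0 : ℝ), 0 ≤ γ r


theorem tri (n : ℕ) (f : ℕ → ℕ → ℝ) :
    ∑ m ∈ range n, ∑ j ∈ range (m+1), f m j = ∑ j ∈ range n, ∑ m ∈ Ico j n, f m j := by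
  induction n with
  | zero => simp
  | succ n ih =>
    have step : ∀ j ∈ range n, ∑ m ∈ Ico j (n+1), f m j = (∑ m ∈ Ico j n, f m j) + f n j :=
      fun j hj => Finset.sum_Ico_succ_top (le_of_lt (mem_range.mp hj)) _
    rw [Finset.sum_range_succ, ih,
      Finset.sum_range_succ (fun j => ∑ m ∈ Ico j (n+1), f m j) n,
      Finset.sum_congr rfl step, Finset.sum_add_distrib, Finset.sum_Ico_succ_top le_rfl, Finset.Ico_self, Finset.sum_empty, Finset.sum_range_succ]
    ring



lemma Kseq_pos {μ : ℝ} (hμ : 0 < μ) (m : ℕ) : 0 < Kseq μ m := by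
  apply div_pos
  · exact Real.Gamma_pos_of_pos (by positivity)
  · exact mul_pos (Real.Gamma_pos_of_pos hμ) (Real.Gamma_pos_of_pos (by positivity))

lemma Kseq_zero {μ : ℝ} (hμ : 0 < μ) : Kseq μ 0 = 1 := by
  have h1 : Real.Gamma μ ≠ 0 := (Real.Gamma_pos_of_pos hμ).ne'
  simp [Kseq, Real.Gamma_one, div_self, h1]

lemma Kseq_rec {μ : ℝ} (hμ : 0 < μ) (m : ℕ) :
    ((m : ℝ) + 1) * Kseq μ (m + 1) = ((m : ℝ) + μ) * Kseq μ m := by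
  have h1 : ((m : ℝ) + μ) ≠ 0 := by positivity
  have h2 : ((m : ℝ) + 1) ≠ 0 := by positivity
  have e1 : ((m + 1 : ℕ) : ℝ) + μ = ((m : ℝ) + μ) + 1 := by push_cast; ring
  have e2 : ((m + 1 : ℕ) : ℝ) + 1 = ((m : ℝ) + 1) + 1 := by push_cast; ring
  have g1 : Real.Gamma (((m + 1 : ℕ) : ℝ) + μ) = ((m : ℝ) + μ) * Real.Gamma ((m : ℝ) + μ) := by
    rw [e1, Real.Gamma_add_one h1]
  have g2 : Real.Gamma (((m + 1 : ℕ) : ℝ) + 1) = ((m : ℝ) + 1) * Real.Gamma ((m : ℝ) + 1) := by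
    rw [e2, Real.Gamma_add_one h2]
  have hΓμ : Real.Gamma μ ≠ 0 := (Real.Gamma_pos_of_pos hμ).ne'
  have hΓm1 : Real.Gamma ((m : ℝ) + 1) ≠ 0 :=
    (Real.Gamma_pos_of_pos (by positivity)).ne'
  unfold Kseq
  rw [g1, g2]
  field_simp

lemma Kseq_succ_le {μ : ℝ} (hμ0 : 0 < μ) (hμ1 : μ ≤ 1) (m : ℕ) :
    Kseq μ (m + 1) ≤ Kseq μ m := by
  have hrec := Kseq_rec hμ0 m
  have h2 : (0:ℝ) < (m : ℝ) + 1 := by positivity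
  have hp := Kseq_pos hμ0 m
  nlinarith [Kseq_pos hμ0 (m+1)]

lemma Kseq_ratio {μ : ℝ} (hμ0 : 0 < μ) (hμ1 : μ ≤ 1) {k m : ℕ} (hkm : k ≤ m) :
    Kseq μ (k + 1) * Kseq μ m ≤ Kseq μ (m + 1) * Kseq μ k := by
  have rk := Kseq_rec hμ0 k
  have rm := Kseq_rec hμ0 m
  have hk1 : (0:ℝ) < (k : ℝ) + 1 := by positivity
  have hm1 : (0:ℝ) < (m : ℝ) + 1 := by positivity
  have pk := Kseq_pos hμ0 k
  have pm := Kseq_pos hμ0 m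
  have hkmR : (k : ℝ) ≤ m := Nat.cast_le.mpr hkm
  -- (k+μ)(m+1) ≤ (m+μ)(k+1)
  have key : ((k : ℝ) + μ) * ((m : ℝ) + 1) ≤ ((m : ℝ) + μ) * ((k : ℝ) + 1) := by nlinarith
  have e1 : Kseq μ (k+1) = ((k:ℝ)+μ)/((k:ℝ)+1) * Kseq μ k := by
    field_simp at rk ⊢; linarith [rk]
  have e2 : Kseq μ (m+1) = ((m:ℝ)+μ)/((m:ℝ)+1) * Kseq μ m := by
    field_simp at rm ⊢; linarith [rm]
  have key2 : ((k:ℝ)+μ)*Kseq μ k * (((m:ℝ)+1)*Kseq μ m) ≤ ((m:ℝ)+μ)*Kseq μ m * (((k:ℝ)+1)*Kseq μ k) := by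
    nlinarith [mul_le_mul_of_nonneg_right key (mul_pos pk pm).le]
  have H : ((k:ℝ)+1)*((m:ℝ)+1)*(Kseq μ (k+1)*Kseq μ m) ≤ ((k:ℝ)+1)*((m:ℝ)+1)*(Kseq μ (m+1)*Kseq μ k) := by
    calc ((k:ℝ)+1)*((m:ℝ)+1)*(Kseq μ (k+1)*Kseq μ m)
        = (((k:ℝ)+1)*Kseq μ (k+1))*(((m:ℝ)+1)*Kseq μ m) := by ring
      _ = ((k:ℝ)+μ)*Kseq μ k * (((m:ℝ)+1)*Kseq μ m) := by rw [rk]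
      _ ≤ ((m:ℝ)+μ)*Kseq μ m * (((k:ℝ)+1)*Kseq μ k) := key2
      _ = (((m:ℝ)+1)*Kseq μ (m+1))*(((k:ℝ)+1)*Kseq μ k) := by rw [rm]
      _ = ((k:ℝ)+1)*((m:ℝ)+1)*(Kseq μ (m+1)*Kseq μ k) := by ring
  exact le_of_mul_le_mul_left H (by positivity)

lemma Kseq_one_eq (p : ℕ) : Kseq 1 p = 1 := by
  have : Real.Gamma ((p : ℝ) + 1) ≠ 0 := (Real.Gamma_pos_of_pos (by positivity)).ne'
  simp [Kseq, Real.Gamma_one, div_self, this]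

lemma Kseq_sum_mul {μ : ℝ} (hμ : 0 < μ) (N : ℕ) :
    ((N : ℝ) + 1) * Kseq μ (N + 1) = μ * ∑ j ∈ range (N + 1), Kseq μ j := by
  induction N with
  | zero => simpa [Kseq_zero hμ] using Kseq_rec hμ 0
  | succ N ih =>
    have hr := Kseq_rec hμ (N + 1)
    rw [Finset.sum_range_succ (f := fun j => Kseq μ j) (n := N+1)]
    push_cast at hr ⊢
    nlinarith [hr, ih]

lemma Kseq_sum_ge {μ : ℝ} (hμ : 0 < μ) (N : ℕ) :
    1 + μ * ∑ i ∈ range N, 1 / ((i : ℝ) + 1) ≤ ∑ j ∈ range (N + 1), Kseq μ j := by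
  induction N with
  | zero => simp [Kseq_zero hμ]
  | succ N ih =>
    have hsum1 : (1:ℝ) ≤ ∑ j ∈ range (N + 1), Kseq μ j := by
      calc (1:ℝ) = Kseq μ 0 := (Kseq_zero hμ).symm
      _ ≤ ∑ j ∈ range (N + 1), Kseq μ j := by
          apply Finset.single_le_sum (f := fun j => Kseq μ j)
          · intro i _; exact (Kseq_pos hμ i).le
          · simp
    have hK : Kseq μ (N + 1) = μ * (∑ j ∈ range (N + 1), Kseq μ j) / ((N : ℝ) + 1) := by
      have := Kseq_sum_mul hμ N
      field_simp
      linarith [this]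
    rw [Finset.sum_range_succ (f := fun j => Kseq μ j), hK,
      Finset.sum_range_succ (f := fun i => 1 / ((i : ℝ) + 1))]
    have hN1 : (0:ℝ) < (N : ℝ) + 1 := by positivity
    have h2 : μ * 1 / ((N:ℝ)+1) ≤ μ * (∑ j ∈ range (N + 1), Kseq μ j) / ((N : ℝ) + 1) := by
      gcongr
    have h3 : μ * 1 / ((N:ℝ)+1) = μ * (1/((N:ℝ)+1)) := by ring
    nlinarith [ih, h2]

lemma Kseq_sum_tendsto {μ : ℝ} (hμ : 0 < μ) :
    Tendsto (fun N => ∑ j ∈ range (N + 1), Kseq μ j) atTop atTop := by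
  apply tendsto_atTop_mono (Kseq_sum_ge hμ)
  apply tendsto_atTop_add_const_left
  exact Tendsto.const_mul_atTop hμ Real.tendsto_sum_range_one_div_nat_succ_atTop

lemma Kseq_vandermonde {ν : ℝ} (hν0 : 0 < ν) (hν1 : ν < 1) (p : ℕ) :
    ∑ i ∈ range (p + 1), Kseq ν (p - i) * Kseq (1 - ν) i = 1 := by
  have hμ : 0 < 1 - ν := by linarith
  induction p with
  | zero => simp [Kseq_zero hν0, Kseq_zero hμ]
  | succ p ih =>
    have hp1 : ((p:ℝ) + 1) ≠ 0 := by positivity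
    apply mul_left_cancel₀ hp1
    have step : ((p:ℝ)+1) * ∑ i ∈ range (p+2), Kseq ν (p+1-i) * Kseq (1-ν) i
        = (∑ i ∈ range (p+2), ((p+1-i : ℕ):ℝ) * (Kseq ν (p+1-i) * Kseq (1-ν) i))
        + ∑ i ∈ range (p+2), (i:ℝ) * (Kseq ν (p+1-i) * Kseq (1-ν) i) := by
      rw [Finset.mul_sum, ← Finset.sum_add_distrib]
      apply Finset.sum_congr rfl
      intro i hi
      have hip : i ≤ p+1 := Nat.lt_succ_iff.mp (Finset.mem_range.mp hi)
      rw [Nat.cast_sub hip]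
      push_cast
      ring
    have s1 : ∑ i ∈ range (p+2), ((p+1-i : ℕ):ℝ) * (Kseq ν (p+1-i) * Kseq (1-ν) i)
        = ∑ i ∈ range (p+1), (((p-i:ℕ):ℝ)+ν) * (Kseq ν (p-i) * Kseq (1-ν) i) := by
      rw [Finset.sum_range_succ]
      simp only [Nat.sub_self, Nat.cast_zero, zero_mul, add_zero]
      apply Finset.sum_congr rfl
      intro i hi
      have hip : i ≤ p := Nat.lt_succ_iff.mp (Finset.mem_range.mp hi)
      have e : p + 1 - i = (p - i) + 1 := by omega
      rw [e]
      have := Kseq_rec hν0 (p - i)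
      push_cast at this ⊢
      linear_combination Kseq (1-ν) i * this
    have s2 : ∑ i ∈ range (p+2), (i:ℝ) * (Kseq ν (p+1-i) * Kseq (1-ν) i)
        = ∑ j ∈ range (p+1), (((j:ℕ):ℝ)+(1-ν)) * (Kseq ν (p-j) * Kseq (1-ν) j) := by
      rw [Finset.sum_range_succ']
      simp only [Nat.cast_zero, zero_mul, add_zero]
      apply Finset.sum_congr rfl
      intro j hj
      have e : p + 1 - (j+1) = p - j := by omega
      rw [e]
      have := Kseq_rec hμ j
      push_cast at this ⊢
      linear_combination Kseq ν (p-j) * this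
    rw [step, s1, s2, ← Finset.sum_add_distrib]
    have final : ∑ i ∈ range (p+1), ((((p-i:ℕ):ℝ)+ν) * (Kseq ν (p-i) * Kseq (1-ν) i)
        + (((i:ℕ):ℝ)+(1-ν)) * (Kseq ν (p-i) * Kseq (1-ν) i))
        = ((p:ℝ)+1) * ∑ i ∈ range (p+1), Kseq ν (p-i) * Kseq (1-ν) i := by
      rw [Finset.mul_sum]
      apply Finset.sum_congr rfl
      intro i hi
      have hip : i ≤ p := Nat.lt_succ_iff.mp (Finset.mem_range.mp hi)
      rw [Nat.cast_sub hip]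
      ring
    rw [final, ih]

noncomputable def resv (ε : ℝ) (c : ℕ → ℝ) : ℕ → ℝ
  | N => (ε * c N - ε * ∑ j ∈ (Finset.range N).attach,
      c (N - j.1) * resv ε c j.1) / (1 + ε)
  decreasing_by exact Finset.mem_range.mp j.2

lemma resv_eq (ε : ℝ) (c : ℕ → ℝ) (N : ℕ) :
    resv ε c N = (ε * c N - ε * ∑ j ∈ Finset.range N, c (N - j) * resv ε c j) / (1 + ε) := by
  rw [resv]
  congr 1
  rw [← Finset.sum_attach (Finset.range N) (fun j => c (N - j) * resv ε c j)]

section Master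

variable {c : ℕ → ℝ} {ε : ℝ}

lemma resv_star (hc0 : c 0 = 1) (hε : 0 < ε) (N : ℕ) :
    resv ε c N + ε * ∑ j ∈ Finset.range (N+1), c (N - j) * resv ε c j = ε * c N := by
  have h1 : (1:ℝ) + ε ≠ 0 := by positivity
  have := resv_eq ε c N
  rw [Finset.sum_range_succ, Nat.sub_self, hc0]
  field_simp at this ⊢
  linarith [this]

lemma resv_nonneg (hc0 : c 0 = 1) (hcpos : ∀ m, 0 < c m)
    (hratio : ∀ k m : ℕ, k ≤ m → c (k+1) * c m ≤ c (m+1) * c k)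
    (hε : 0 < ε) : ∀ N, 0 ≤ resv ε c N := by
  intro N
  induction N using Nat.strong_induction_on with
  | _ N ih =>
    match N with
    | 0 =>
      rw [resv_eq]
      simp [hc0]
      positivity
    | (M+1) =>
      have h1 : (0:ℝ) < 1 + ε := by positivity
      rw [resv_eq]
      apply div_nonneg _ h1.le
      rw [sub_nonneg]
      -- bound: ε * Σ_{j<M+1} c (M+1-j) * s j ≤ ε * c (M+1)
      have hterm : ∀ j ∈ Finset.range (M+1),
          c (M+1-j) * resv ε c j ≤ (c (M+1) / c M) * (c (M-j) * resv ε c j) := by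
        intro j hj
        have hjM : j ≤ M := Nat.lt_succ_iff.mp (Finset.mem_range.mp hj)
        have hsj : 0 ≤ resv ε c j := ih j (Nat.lt_succ_of_le hjM)
        have hkey : c ((M-j)+1) * c M ≤ c (M+1) * c (M-j) := hratio (M-j) M (Nat.sub_le M j)
        have e : M+1-j = (M-j)+1 := by omega
        rw [e]
        rw [div_mul_eq_mul_div, le_div_iff₀ (hcpos M)]
        calc c ((M-j)+1) * resv ε c j * c M = (c ((M-j)+1) * c M) * resv ε c j := by ring
          _ ≤ (c (M+1) * c (M-j)) * resv ε c j := by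
              exact mul_le_mul_of_nonneg_right hkey hsj
          _ = c (M+1) * (c (M-j) * resv ε c j) := by ring
      have hsum : ∑ j ∈ Finset.range (M+1), c (M+1-j) * resv ε c j
          ≤ (c (M+1) / c M) * ∑ j ∈ Finset.range (M+1), c (M-j) * resv ε c j := by
        rw [Finset.mul_sum]
        exact Finset.sum_le_sum hterm
      have hstarM := resv_star hc0 hε M
      have hsM : 0 ≤ resv ε c M := ih M (Nat.lt_succ_self M)
      have h2 : ε * ∑ j ∈ Finset.range (M+1), c (M-j) * resv ε c j = ε * c M - resv ε c M := by
        linarith [hstarM]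
      have h3 : ε * ∑ j ∈ Finset.range (M+1), c (M+1-j) * resv ε c j
          ≤ (c (M+1) / c M) * (ε * c M - resv ε c M) := by
        calc ε * ∑ j ∈ Finset.range (M+1), c (M+1-j) * resv ε c j
            ≤ ε * ((c (M+1) / c M) * ∑ j ∈ Finset.range (M+1), c (M-j) * resv ε c j) := by
              exact mul_le_mul_of_nonneg_left hsum hε.le
          _ = (c (M+1) / c M) * (ε * ∑ j ∈ Finset.range (M+1), c (M-j) * resv ε c j) := by ring
          _ = (c (M+1) / c M) * (ε * c M - resv ε c M) := by rw [h2]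
      have h4 : (c (M+1) / c M) * (ε * c M - resv ε c M) ≤ ε * c (M+1) := by
        have hq : 0 ≤ c (M+1) / c M := (div_pos (hcpos _) (hcpos _)).le
        have : (c (M+1) / c M) * (ε * c M - resv ε c M) ≤ (c (M+1) / c M) * (ε * c M) := by
          apply mul_le_mul_of_nonneg_left _ hq
          linarith
        calc (c (M+1) / c M) * (ε * c M - resv ε c M) ≤ (c (M+1) / c M) * (ε * c M) := this
          _ = ε * c (M+1) := by
              have hne : c M ≠ 0 := (hcpos M).ne'
              field_simp
      linarith

end Master

theorem master (c : ℕ → ℝ) (hc0 : c 0 = 1) (hcpos : ∀ m, 0 < c m)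
    (hcdec : ∀ m, c (m+1) ≤ c m)
    (hratio : ∀ k m : ℕ, k ≤ m → c (k+1) * c m ≤ c (m+1) * c k)
    (hCdiv : Tendsto (fun N => ∑ j ∈ range (N+1), c j) atTop atTop)
    (ε : ℝ) (hε : 0 < ε) (θ : ℝ) (g μ : ℕ → ℝ)
    (hg : ∀ N, g (N+1) = g 0 - ∑ m ∈ range (N+1), c (N-m) * μ m)
    (hμ : ∀ m, ε * (g (m+1) - θ) ≤ μ m) :
    ∃ u : ℕ → ℝ, Tendsto u atTop (nhds 0) ∧ ∀ N, g (N+1) ≤ θ + (g 0 - θ) * u (N+1) := by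
  have h1ε : (0:ℝ) < 1 + ε := by positivity
  set s : ℕ → ℝ := resv ε c with hs
  have hstar : ∀ N, s N + ε * ∑ j ∈ range (N+1), c (N - j) * s j = ε * c N :=
    fun N => resv_star hc0 hε N
  have snn : ∀ N, 0 ≤ s N := resv_nonneg hc0 hcpos hratio hε
  set u : ℕ → ℝ := fun N => 1 - ∑ j ∈ range N, s j with hu
  have u0 : u 0 = 1 := by simp [hu]
  have usucc : ∀ N, u (N+1) = u N - s N := by
    intro N; simp only [hu, Finset.sum_range_succ]; ring
  have uanti : ∀ {m n : ℕ}, m ≤ n → u n ≤ u m := by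
    intro m n hmn
    have : Antitone u := antitone_nat_of_succ_le (fun N => by
      rw [usucc]; linarith [snn N])
    exact this hmn
  -- coefficient partial sums
  set CC : ℕ → ℝ := fun M => ∑ i ∈ range (M+1), c i with hCC
  have reflC : ∀ M, ∑ i ∈ range (M+1), c (M - i) = CC M := by
    intro M
    have := Finset.sum_range_reflect c (M+1)
    simpa using this
  have innerC1 : ∀ N j, j ∈ range (N+1) → ∀ D : ℝ,
      ∑ m ∈ Ico j (N+1), c (m - j) * D = CC (N-j) * D := by
    intro N j hj D
    have hjN : j ≤ N := Nat.lt_succ_iff.mp (mem_range.mp hj)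
    rw [Finset.sum_Ico_eq_sum_range]
    have e1 : N + 1 - j = (N - j) + 1 := by omega
    rw [e1, hCC, Finset.sum_mul]
    apply Finset.sum_congr rfl
    intro i _
    rw [Nat.add_sub_cancel_left]
  have innerC2 : ∀ N j, j ∈ range (N+1) → ∀ D : ℝ,
      ∑ m ∈ Ico j (N+1), c (N - m) * D = CC (N-j) * D := by
    intro N j hj D
    have hjN : j ≤ N := Nat.lt_succ_iff.mp (mem_range.mp hj)
    rw [Finset.sum_Ico_eq_sum_range]
    have e1 : N + 1 - j = (N - j) + 1 := by omega
    rw [e1, ← reflC (N-j), Finset.sum_mul]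
    apply Finset.sum_congr rfl
    intro i hi
    have hi' : i ≤ N - j := Nat.lt_succ_iff.mp (mem_range.mp hi)
    have e2 : N - (j + i) = N - j - i := by omega
    rw [e2]
  -- partial sums of star identity (A)
  have A : ∀ N, (∑ j ∈ range (N+1), s j) + ε * ∑ j ∈ range (N+1), CC (N-j) * s j
      = ε * CC N := by
    intro N
    have h1 : ∑ m ∈ range (N+1), (s m + ε * ∑ j ∈ range (m+1), c (m - j) * s j)
        = ∑ m ∈ range (N+1), ε * c m :=
      Finset.sum_congr rfl (fun m _ => hstar m)
    rw [Finset.sum_add_distrib, ← Finset.mul_sum, ← Finset.mul_sum,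
      tri (N+1) (fun m j => c (m - j) * s j)] at h1
    rw [Finset.sum_congr rfl (fun j hj => innerC1 N j hj (s j))] at h1
    exact h1
  -- the ML identity (E)
  have E : ∀ N, u (N+1) + ε * ∑ m ∈ range (N+1), c (N-m) * u (m+1) = 1 := by
    intro N
    have split : ∀ m, c (N-m) * u (m+1) = c (N-m) - c (N-m) * (∑ j ∈ range (m+1), s j) := by
      intro m; simp only [hu]; ring
    rw [Finset.sum_congr rfl (fun m _ => split m), Finset.sum_sub_distrib]
    have e1 : ∑ m ∈ range (N+1), c (N-m) = CC N := reflC N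
    have e2 : ∑ m ∈ range (N+1), c (N-m) * (∑ j ∈ range (m+1), s j)
        = ∑ j ∈ range (N+1), CC (N-j) * s j := by
      have expand : ∀ m, m ∈ range (N+1) → c (N-m) * (∑ j ∈ range (m+1), s j)
          = ∑ j ∈ range (m+1), c (N-m) * s j := fun m _ => Finset.mul_sum _ _ _
      rw [Finset.sum_congr rfl expand, tri (N+1) (fun m j => c (N-m) * s j)]
      exact Finset.sum_congr rfl (fun j hj => innerC2 N j hj (s j))
    rw [e1, e2]
    have := A N
    simp only [hu]
    linarith [this]
  -- the stepped recursion derived from E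
  have Mid : ∀ K, (1+ε) * u (K+2)
      = u (K+1) + ε * ∑ m ∈ range (K+1), (c (K-m) - c (K+1-m)) * u (m+1) := by
    intro K
    have e1 := E (K+1)
    have e2 := E K
    rw [Finset.sum_range_succ] at e1
    have e0 : K+1-(K+1) = 0 := by omega
    rw [e0, hc0] at e1
    have expand : ∑ m ∈ range (K+1), (c (K-m) - c (K+1-m)) * u (m+1)
        = ∑ m ∈ range (K+1), c (K-m) * u (m+1)
          - ∑ m ∈ range (K+1), c (K+1-m) * u (m+1) := by
      rw [← Finset.sum_sub_distrib]
      exact Finset.sum_congr rfl (fun m _ => by ring)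
    rw [expand]
    ring_nf at e1 e2 ⊢
    linarith [e1, e2]
  have u1 : (1+ε) * u 1 = 1 := by
    have h0 := hstar 0
    norm_num [Finset.sum_range_one, hc0] at h0
    have e : u 1 = 1 - s 0 := by rw [usucc 0, u0]
    rw [e]
    ring_nf
    ring_nf at h0
    linarith [h0]
  have unn : ∀ N, 0 ≤ u N := by
    intro N
    induction N using Nat.strong_induction_on with
    | _ N ih =>
      match N with
      | 0 => rw [u0]; norm_num
      | 1 => nlinarith [u1]
      | (K+2) =>
        have hM := Mid K
        have hsum : 0 ≤ ∑ m ∈ range (K+1), (c (K-m) - c (K+1-m)) * u (m+1) := by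
          apply Finset.sum_nonneg
          intro m hm
          have hmK : m ≤ K := Nat.lt_succ_iff.mp (mem_range.mp hm)
          have e : K+1-m = (K-m)+1 := by omega
          have hcd : c (K+1-m) ≤ c (K-m) := by rw [e]; exact hcdec (K-m)
          exact mul_nonneg (by linarith) (ih (m+1) (by omega))
        nlinarith [ih (K+1) (by omega)]
  have ulim : Tendsto u atTop (nhds 0) := by
    have hmono : Antitone u := antitone_nat_of_succ_le (fun N => by
      rw [usucc]; linarith [snn N])
    have hbdd : BddBelow (Set.range u) := ⟨0, fun y ⟨n, hn⟩ => hn ▸ unn n⟩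
    have hconv := tendsto_atTop_ciInf hmono hbdd
    suffices hL : ⨅ n, u n = 0 by rwa [hL] at hconv
    have hL0 : 0 ≤ ⨅ n, u n := le_ciInf unn
    by_contra hne
    have hL : 0 < ⨅ n, u n := lt_of_le_of_ne hL0 (Ne.symm hne)
    set L := ⨅ n, u n
    obtain ⟨N, hN⟩ := (hCdiv.eventually_gt_atTop (1/(ε*L))).exists
    have hCN : 1/(ε*L) < CC N := hN
    have hub : L * CC N ≤ ∑ m ∈ range (N+1), c (N-m) * u (m+1) := by
      have hterm : ∀ m ∈ range (N+1), c (N-m) * L ≤ c (N-m) * u (m+1) := by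
        intro m _
        exact mul_le_mul_of_nonneg_left (ciInf_le hbdd (m+1)) (hcpos (N-m)).le
      calc L * CC N = ∑ m ∈ range (N+1), c (N-m) * L := by
            rw [← reflC N, Finset.mul_sum]
            exact Finset.sum_congr rfl (fun m _ => by ring)
        _ ≤ _ := Finset.sum_le_sum hterm
    have hE := E N
    have hCpos : 0 < CC N := by
      have : (0:ℝ) < 1/(ε*L) := by positivity
      linarith
    have : 1 < ε * L * CC N := by
      rw [div_lt_iff₀ (by positivity)] at hCN
      nlinarith
    nlinarith [unn (N+1), mul_le_mul_of_nonneg_left hub hε.le]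
  -- comparison machinery
  set ρ : ℕ → ℝ := fun m => μ m - ε * (g (m+1) - θ) with hρdef
  have ρnn : ∀ m, 0 ≤ ρ m := fun m => by simp only [hρdef]; linarith [hμ m]
  set W : ℕ → ℝ := fun N => (1/ε) * ∑ j ∈ range (N+1), s (N-j) * ρ j with hW
  have Wnn : ∀ N, 0 ≤ W N := by
    intro N
    apply mul_nonneg (by positivity)
    exact Finset.sum_nonneg (fun j _ => mul_nonneg (snn (N-j)) (ρnn j))
  have innerC3 : ∀ N j, j ∈ range (N+1) →
      ∑ m ∈ Ico j (N+1), c (N-m) * (s (m-j) * ρ j)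
      = (∑ i ∈ range ((N-j)+1), c ((N-j)-i) * s i) * ρ j := by
    intro N j hj
    have hjN : j ≤ N := Nat.lt_succ_iff.mp (mem_range.mp hj)
    rw [Finset.sum_Ico_eq_sum_range]
    have e1 : N + 1 - j = (N - j) + 1 := by omega
    rw [e1, Finset.sum_mul]
    apply Finset.sum_congr rfl
    intro i hi
    have hi' : i ≤ N - j := Nat.lt_succ_iff.mp (mem_range.mp hi)
    have e2 : N - (j + i) = N - j - i := by omega
    have e3 : j + i - j = i := by omega
    rw [e2, e3]
    ring
  have PW : ∀ N, W N + ε * ∑ m ∈ range (N+1), c (N-m) * W m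
      = ∑ m ∈ range (N+1), c (N-m) * ρ m := by
    intro N
    have expand : ∀ m ∈ range (N+1), c (N-m) * W m
        = ∑ j ∈ range (m+1), (1/ε) * (c (N-m) * (s (m-j) * ρ j)) := by
      intro m _
      simp only [hW, Finset.mul_sum]
      apply Finset.sum_congr rfl
      intro j _
      ring
    rw [Finset.sum_congr rfl expand]
    rw [tri (N+1) (fun m j => (1/ε) * (c (N-m) * (s (m-j) * ρ j)))]
    have inner : ∀ j ∈ range (N+1), ∑ m ∈ Ico j (N+1), (1/ε) * (c (N-m) * (s (m-j) * ρ j))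
        = (1/ε) * ((ε * c (N-j) - s (N-j))/ε) * ρ j := by
      intro j hj
      rw [← Finset.mul_sum, innerC3 N j hj]
      have hst := hstar (N-j)
      have : ∑ i ∈ range ((N-j)+1), c ((N-j)-i) * s i = (ε * c (N-j) - s (N-j))/ε := by
        rw [eq_div_iff hε.ne']
        linarith [hst]
      rw [this]
      ring
    rw [Finset.sum_congr rfl inner]
    have final : ∀ j ∈ range (N+1), (1/ε) * ((ε * c (N-j) - s (N-j))/ε) * ρ j
        = (1/ε) * (c (N-j) * ρ j) - (1/(ε*ε)) * (s (N-j) * ρ j) := by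
      intro j _
      field_simp
    rw [Finset.sum_congr rfl final, Finset.sum_sub_distrib, ← Finset.mul_sum, ← Finset.mul_sum]
    simp only [hW]
    have hεne := hε.ne'
    field_simp
    ring
  set D : ℕ → ℝ := fun N => θ + (g 0 - θ) * u (N+1) - g (N+1) with hD
  have PD : ∀ N, D N + ε * ∑ m ∈ range (N+1), c (N-m) * D m
      = ∑ m ∈ range (N+1), c (N-m) * ρ m := by
    intro N
    have split1 : ∑ m ∈ range (N+1), c (N-m) * D m
        = θ * CC N + (g 0 - θ) * (∑ m ∈ range (N+1), c (N-m) * u (m+1))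
          - ∑ m ∈ range (N+1), c (N-m) * g (m+1) := by
      have e : ∀ m ∈ range (N+1), c (N-m) * D m
          = θ * c (N-m) + (g 0 - θ) * (c (N-m) * u (m+1)) - c (N-m) * g (m+1) := by
        intro m _
        simp only [hD]
        ring
      rw [Finset.sum_congr rfl e, Finset.sum_sub_distrib, Finset.sum_add_distrib,
        ← Finset.mul_sum, ← Finset.mul_sum, reflC N]
    have split2 : ∑ m ∈ range (N+1), c (N-m) * μ m
        = (∑ m ∈ range (N+1), c (N-m) * ρ m)
          + ε * (∑ m ∈ range (N+1), c (N-m) * g (m+1)) - ε * θ * CC N := by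
      have e : ∀ m ∈ range (N+1), c (N-m) * μ m
          = c (N-m) * ρ m + ε * (c (N-m) * g (m+1)) - ε * θ * c (N-m) := by
        intro m _
        simp only [hρdef]
        ring
      rw [Finset.sum_congr rfl e, Finset.sum_sub_distrib, Finset.sum_add_distrib,
        ← Finset.mul_sum, ← Finset.mul_sum, reflC N]
    have hgN := hg N
    have hEN := E N
    simp only [hD]
    rw [split1]
    rw [split2] at hgN
    linear_combination (g 0 - θ) * hEN - hgN
  have DW : ∀ N, D N = W N := by
    intro N
    induction N using Nat.strong_induction_on with
    | _ N ih =>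
      have pd := PD N
      have pw := PW N
      rw [Finset.sum_range_succ, Nat.sub_self, hc0, one_mul] at pd pw
      have hsame : ∑ m ∈ range N, c (N-m) * D m = ∑ m ∈ range N, c (N-m) * W m := by
        apply Finset.sum_congr rfl
        intro m hm
        rw [ih m (mem_range.mp hm)]
      rw [hsame] at pd
      have : (1+ε) * D N = (1+ε) * W N := by ring_nf; ring_nf at pd pw; linarith [pd, pw]
      exact mul_left_cancel₀ h1ε.ne' this
  refine ⟨u, ulim, fun N => ?_⟩
  have := DW N
  have hWn := Wnn N
  simp only [hD] at this
  linarith [this.ge.trans_eq' rfl, hWn]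

noncomputable def bseq (ν : ℝ) (m : ℕ) : ℝ :=
  if ν = 1 then (if m = 0 then 1 else 0) else Kseq (1 - ν) m


lemma caputoD_eq (h a ν : ℝ) (hh : 0 < h) (hν1 : ν ≤ 1) (y : ℝ → ℝ) (k : ℕ) :
    caputoD h a ν y k = (h ^ ν)⁻¹ * ∑ j ∈ Finset.range (k + 1),
      bseq ν (k - j) * (y (a + ((j : ℝ) + 1) * h) - y (a + (j : ℝ) * h)) := by
  by_cases hν : ν = 1
  · subst hν
    rw [caputoD, if_pos rfl]
    have hsum : ∑ j ∈ Finset.range (k + 1),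
        bseq 1 (k - j) * (y (a + ((j : ℝ) + 1) * h) - y (a + (j : ℝ) * h))
        = y (a + ((k : ℝ) + 1) * h) - y (a + (k : ℝ) * h) := by
      rw [Finset.sum_eq_single k]
      · simp [bseq]
      · intro j hj hjk
        have : k - j ≠ 0 := by
          have := Finset.mem_range.mp hj
          omega
        simp [bseq, this]
      · intro hk
        exact absurd (Finset.self_mem_range_succ k) hk
    rw [hsum, Real.rpow_one, fdiff]
    have arg : a + (k : ℝ) * h + h = a + ((k : ℝ) + 1) * h := by ring
    rw [arg]
    field_simp
  · rw [caputoD, if_neg hν]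
    have hν1' : ν < 1 := lt_of_le_of_ne hν1 hν
    have hΓ : (0:ℝ) < Real.Gamma (1 - ν) := Real.Gamma_pos_of_pos (by linarith)
    rw [Finset.mul_sum, Finset.mul_sum]
    apply Finset.sum_congr rfl
    intro j hj
    have hjk : j ≤ k := Nat.lt_succ_iff.mp (Finset.mem_range.mp hj)
    set m := k - j with hm
    have hcast : ((m : ℕ) : ℝ) = (k : ℝ) - (j : ℝ) := by
      rw [hm, Nat.cast_sub hjk]
    have e1 : a + (1 - ν) * h + (k : ℝ) * h - (a + (j : ℝ) * h + h) = (((m:ℕ):ℝ) - ν) * h := by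
      rw [hcast]; ring
    rw [hfact, e1, mul_div_cancel_right₀ _ hh.ne']
    have e2 : ((m:ℕ):ℝ) - ν + 1 = ((m:ℕ):ℝ) + (1 - ν) := by ring
    have e3 : ((m:ℕ):ℝ) - ν + 1 - -ν = ((m:ℕ):ℝ) + 1 := by ring
    rw [e2]
    rw [show ((m:ℕ):ℝ) + (1 - ν) - -ν = ((m:ℕ):ℝ) + 1 by ring]
    rw [fdiff]
    have arg : a + (j : ℝ) * h + h = a + ((j : ℝ) + 1) * h := by ring
    rw [arg]
    rw [bseq, if_neg hν, Kseq]
    have hrpow : h ^ (-ν) = (h ^ ν)⁻¹ := Real.rpow_neg hh.le ν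
    rw [hrpow]
    have hΓm : Real.Gamma (((m:ℕ):ℝ) + 1) ≠ 0 :=
      (Real.Gamma_pos_of_pos (by positivity)).ne'
    have hhne : h ≠ 0 := hh.ne'
    have hpν : (0:ℝ) < h ^ ν := Real.rpow_pos_of_pos hh ν
    field_simp

lemma conv_one {ν : ℝ} (hν0 : 0 < ν) (hν1 : ν ≤ 1) (p : ℕ) :
    ∑ i ∈ range (p + 1), Kseq ν (p - i) * bseq ν i = 1 := by
  by_cases hν : ν = 1
  · subst hν
    rw [Finset.sum_eq_single 0]
    · simp [bseq, Kseq_one_eq]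
    · intro i hi hi0
      simp [bseq, hi0]
    · intro hp
      simp at hp
  · have hlt : ν < 1 := lt_of_le_of_ne hν1 hν
    have : ∀ i ∈ range (p+1), Kseq ν (p-i) * bseq ν i = Kseq ν (p-i) * Kseq (1-ν) i := by
      intro i _
      rw [bseq, if_neg hν]
    rw [Finset.sum_congr rfl this]
    exact Kseq_vandermonde hν0 hlt p

lemma g_repr {ν : ℝ} (hν0 : 0 < ν) (hν1 : ν ≤ 1) (g : ℕ → ℝ) (N : ℕ) :
    ∑ m ∈ range (N+1), Kseq ν (N-m) *
      (∑ j ∈ range (m+1), bseq ν (m-j) * (g (j+1) - g j))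
    = g (N+1) - g 0 := by
  have expand : ∀ m ∈ range (N+1), Kseq ν (N-m) *
      (∑ j ∈ range (m+1), bseq ν (m-j) * (g (j+1) - g j))
      = ∑ j ∈ range (m+1), Kseq ν (N-m) * (bseq ν (m-j) * (g (j+1) - g j)) :=
    fun m _ => Finset.mul_sum _ _ _
  rw [Finset.sum_congr rfl expand,
    tri (N+1) (fun m j => Kseq ν (N-m) * (bseq ν (m-j) * (g (j+1) - g j)))]
  have inner : ∀ j ∈ range (N+1),
      ∑ m ∈ Ico j (N+1), Kseq ν (N-m) * (bseq ν (m-j) * (g (j+1) - g j))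
      = g (j+1) - g j := by
    intro j hj
    have hjN : j ≤ N := Nat.lt_succ_iff.mp (mem_range.mp hj)
    rw [Finset.sum_Ico_eq_sum_range]
    have e1 : N + 1 - j = (N - j) + 1 := by omega
    rw [e1]
    have e4 : ∀ i ∈ range ((N-j)+1), Kseq ν (N-(j+i)) * (bseq ν (j+i-j) * (g (j+1) - g j))
        = (Kseq ν ((N-j)-i) * bseq ν i) * (g (j+1) - g j) := by
      intro i hi
      have hi' : i ≤ N - j := Nat.lt_succ_iff.mp (mem_range.mp hi)
      have e2 : N - (j + i) = N - j - i := by omega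
      have e3 : j + i - j = i := by omega
      rw [e2, e3]
      ring
    rw [Finset.sum_congr rfl e4, ← Finset.sum_mul, conv_one hν0 hν1 (N-j), one_mul]
  rw [Finset.sum_congr rfl inner]
  exact Finset.sum_range_sub g (N+1)

lemma classK_lt {γ : ℝ → ℝ} (hγ : IsClassK γ) {θ : ℝ} (hθ : 0 < θ) :
    ∃ δ > (0:ℝ), ∀ r : ℝ, 0 ≤ r → r < δ → γ r < θ := by
  obtain ⟨hc, h0, hmono, hnn⟩ := hγ
  have hct : Tendsto γ (nhdsWithin 0 (Set.Ici 0)) (nhds 0) := by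
    have := hc 0 Set.self_mem_Ici
    rwa [ContinuousWithinAt, h0] at this
  have hev : {r : ℝ | γ r < θ} ∈ nhdsWithin 0 (Set.Ici 0) :=
    hct (Iio_mem_nhds hθ)
  obtain ⟨δ, hδ, hsub⟩ := Metric.mem_nhdsWithin_iff.mp hev
  refine ⟨δ, hδ, fun r h0r hrδ => ?_⟩
  exact hsub ⟨Metric.mem_ball.mpr (by rwa [Real.dist_eq, sub_zero, abs_of_nonneg h0r]), h0r⟩

lemma classK_pos {γ : ℝ → ℝ} (hγ : IsClassK γ) {r : ℝ} (hr : 0 < r) : 0 < γ r := by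
  obtain ⟨hc, h0, hmono, hnn⟩ := hγ
  have := hmono Set.self_mem_Ici (le_of_lt hr : (0:ℝ) ≤ r) hr
  rwa [h0] at this

lemma classK_le {γ : ℝ → ℝ} (hγ : IsClassK γ) {r t : ℝ} (hr : 0 ≤ r) (ht : 0 ≤ t)
    (hrt : r ≤ t) : γ r ≤ γ t := hγ.2.2.1.monotoneOn hr ht hrt

theorem stmt2 {n : ℕ} (hn : 1 ≤ n) (h a ν : ℝ) (hh : 0 < h) (hν0 : 0 < ν) (hν1 : ν ≤ 1)
    (f : ℝ → (Fin n → ℝ) → (Fin n → ℝ))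
    (hf0 : ∀ k : ℕ, f (a + (1 - ν) * h + (k : ℝ) * h) 0 = 0)
    (V : ℝ → (Fin n → ℝ) → ℝ) (γ₁ γ₂ γ₃ : ℝ → ℝ)
    (hγ₁ : IsClassK γ₁) (hγ₂ : IsClassK γ₂) (hγ₃ : IsClassK γ₃)
    (hV : ∀ (k : ℕ) (z : Fin n → ℝ),
      γ₁ ‖z‖ ≤ V (a + (k : ℝ) * h) z ∧ V (a + (k : ℝ) * h) z ≤ γ₂ ‖z‖)
    (hdec : ∀ x : ℝ → Fin n → ℝ, IsCaputoSol h a ν f x →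
      ∀ k : ℕ, caputoD h a ν (fun t => V t (x t)) k ≤ -γ₃ ‖x (a + ((k : ℝ) + 1) * h)‖) :
    (∀ ε > (0 : ℝ), ∃ δ > (0 : ℝ), ∀ x : ℝ → Fin n → ℝ,
      IsCaputoSol h a ν f x → ‖x a‖ < δ → ∀ k : ℕ, ‖x (a + (k : ℝ) * h)‖ < ε) ∧
    (∃ δ > (0 : ℝ), ∀ x : ℝ → Fin n → ℝ,
      IsCaputoSol h a ν f x → ‖x a‖ < δ →
        Tendsto (fun k : ℕ => x (a + (k : ℝ) * h)) atTop (nhds 0)) := by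
  have hpν : (0:ℝ) < h ^ ν := Real.rpow_pos_of_pos hh ν
  have hc0 : Kseq ν 0 = 1 := Kseq_zero hν0
  have hcpos : ∀ m, 0 < Kseq ν m := Kseq_pos hν0
  have hcdec : ∀ m, Kseq ν (m+1) ≤ Kseq ν m := Kseq_succ_le hν0 hν1
  have hratio : ∀ k m : ℕ, k ≤ m → Kseq ν (k+1) * Kseq ν m ≤ Kseq ν (m+1) * Kseq ν k :=
    fun k m hkm => Kseq_ratio hν0 hν1 hkm
  have hCdiv := Kseq_sum_tendsto hν0
  -- per-solution core facts
  have core : ∀ x : ℝ → Fin n → ℝ, IsCaputoSol h a ν f x →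
      (∀ N : ℕ, V (a + ((N:ℝ)+1)*h) (x (a + ((N:ℝ)+1)*h)) ≤ V a (x a)) ∧
      (∀ θ : ℝ, 0 < θ → ∃ M : ℕ, ∀ N ≥ M,
        V (a + ((N:ℝ)+1)*h) (x (a + ((N:ℝ)+1)*h)) < θ) := by
    intro x hx
    set g : ℕ → ℝ := fun k => V (a + (k:ℝ)*h) (x (a + (k:ℝ)*h)) with hgdef
    have hg0a : g 0 = V a (x a) := by
      have e : a + ((0:ℕ):ℝ)*h = a := by norm_num
      simp only [hgdef, e]
    have ecast : ∀ N : ℕ, a + ((N+1:ℕ):ℝ)*h = a + ((N:ℝ)+1)*h := by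
      intro N; push_cast; ring
    have hgs : ∀ N : ℕ, g (N+1) = V (a + ((N:ℝ)+1)*h) (x (a + ((N:ℝ)+1)*h)) := by
      intro N
      simp only [hgdef]
      rw [ecast N]
    have sand : ∀ k : ℕ, γ₁ ‖x (a + (k:ℝ)*h)‖ ≤ g k ∧ g k ≤ γ₂ ‖x (a + (k:ℝ)*h)‖ :=
      fun k => hV k _
    have sand' : ∀ m : ℕ, γ₁ ‖x (a + ((m:ℝ)+1)*h)‖ ≤ g (m+1)
        ∧ g (m+1) ≤ γ₂ ‖x (a + ((m:ℝ)+1)*h)‖ := by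
      intro m
      have := sand (m+1)
      rwa [ecast m] at this
    set μf : ℕ → ℝ := fun m => -(h ^ ν * caputoD h a ν (fun t => V t (x t)) m) with hμf
    have hμlow : ∀ m : ℕ, h ^ ν * γ₃ ‖x (a + ((m:ℝ)+1)*h)‖ ≤ μf m := by
      intro m
      have hd := hdec x hx m
      have := mul_le_mul_of_nonneg_left hd hpν.le
      simp only [hμf]
      nlinarith [this]
    have hμnn : ∀ m : ℕ, 0 ≤ μf m := by
      intro m
      refine le_trans ?_ (hμlow m)
      exact mul_nonneg hpν.le (hγ₃.2.2.2 _ (norm_nonneg _))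
    have hdj : ∀ m : ℕ, μf m
        = -(∑ j ∈ Finset.range (m+1), bseq ν (m-j) * (g (j+1) - g j)) := by
      intro m
      simp only [hμf]
      rw [caputoD_eq h a ν hh hν1 (fun t => V t (x t)) m, ← mul_assoc,
        mul_inv_cancel₀ hpν.ne', one_mul, neg_inj]
      apply Finset.sum_congr rfl
      intro j _
      have e1 : g (j+1) = V (a + ((j:ℝ)+1)*h) (x (a + ((j:ℝ)+1)*h)) := hgs j
      have e2 : g j = V (a + (j:ℝ)*h) (x (a + (j:ℝ)*h)) := rfl
      rw [e1, e2]
    have GID : ∀ N, g (N+1) = g 0 - ∑ m ∈ Finset.range (N+1), Kseq ν (N-m) * μf m := by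
      intro N
      have expand : ∀ m ∈ Finset.range (N+1), Kseq ν (N-m) * μf m
          = -(Kseq ν (N-m) * (∑ j ∈ Finset.range (m+1), bseq ν (m-j) * (g (j+1) - g j))) := by
        intro m _
        rw [hdj m]
        ring
      rw [Finset.sum_congr rfl expand, Finset.sum_neg_distrib, g_repr hν0 hν1 g N]
      ring
    have gb : ∀ N, g (N+1) ≤ g 0 := by
      intro N
      rw [GID N]
      have : 0 ≤ ∑ m ∈ Finset.range (N+1), Kseq ν (N-m) * μf m :=
        Finset.sum_nonneg (fun m _ => mul_nonneg (hcpos _).le (hμnn m))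
      linarith
    constructor
    · intro N
      rw [← hgs N, ← hg0a]
      exact gb N
    · intro θ hθ
      by_cases hgθ : g 0 < θ
      · exact ⟨0, fun N _ => by rw [← hgs N]; exact lt_of_le_of_lt (gb N) hgθ⟩
      · push_neg at hgθ
        have hg0pos : 0 < g 0 := lt_of_lt_of_le hθ hgθ
        obtain ⟨δr, hδr, hδsmall⟩ := classK_lt hγ₂ (half_pos hθ)
        set r : ℝ := δr/2 with hrdef
        have hr : 0 < r := by positivity
        have hγ2r : γ₂ r < θ/2 := hδsmall r hr.le (by rw [hrdef]; linarith)
        have hγ3r : 0 < γ₃ r := classK_pos hγ₃ hr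
        have hβ : 0 < h ^ ν * γ₃ r := mul_pos hpν hγ3r
        set ε' : ℝ := (h ^ ν * γ₃ r) / (g 0 + 1) with hε'def
        have hε'pos : 0 < ε' := div_pos hβ (by linarith)
        have hcomp : ∀ m : ℕ, ε' * (g (m+1) - θ/2) ≤ μf m := by
          intro m
          by_cases hgm : g (m+1) ≤ θ/2
          · refine le_trans ?_ (hμnn m)
            nlinarith [hε'pos]
          · push_neg at hgm
            have hxr : r ≤ ‖x (a + ((m:ℝ)+1)*h)‖ := by
              by_contra hlt
              push_neg at hlt
              have h1 : γ₂ ‖x (a + ((m:ℝ)+1)*h)‖ ≤ γ₂ r :=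
                classK_le hγ₂ (norm_nonneg _) hr.le hlt.le
              have h2 := (sand' m).2
              linarith
            have h3 : γ₃ r ≤ γ₃ ‖x (a + ((m:ℝ)+1)*h)‖ :=
              classK_le hγ₃ hr.le (norm_nonneg _) hxr
            have h4 : ε' * (g 0 + 1) = h ^ ν * γ₃ r := by
              rw [hε'def]
              field_simp
            have h5 := gb m
            have h6 := hμlow m
            have h7 : h ^ ν * γ₃ r ≤ h ^ ν * γ₃ ‖x (a + ((m:ℝ)+1)*h)‖ :=
              mul_le_mul_of_nonneg_left h3 hpν.le
            have h8 : ε' * (g (m+1) - θ/2) ≤ ε' * (g 0 + 1) :=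
              mul_le_mul_of_nonneg_left (by linarith) hε'pos.le
            calc ε' * (g (m+1) - θ/2) ≤ ε' * (g 0 + 1) := h8
              _ = h ^ ν * γ₃ r := h4
              _ ≤ h ^ ν * γ₃ ‖x (a + ((m:ℝ)+1)*h)‖ := h7
              _ ≤ μf m := h6
        obtain ⟨u, hulim, hcompare⟩ := master (Kseq ν) hc0 hcpos hcdec hratio hCdiv
          ε' hε'pos (θ/2) g μf GID hcomp
        have hu1lim : Tendsto (fun N : ℕ => (g 0 - θ/2) * u (N+1)) atTop (nhds 0) := by
          have h1 : Tendsto (fun N : ℕ => u (N+1)) atTop (nhds 0) :=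
            hulim.comp (tendsto_add_atTop_nat 1)
          simpa using h1.const_mul (g 0 - θ/2)
        obtain ⟨M, hM⟩ := Metric.tendsto_atTop.mp hu1lim (θ/2) (half_pos hθ)
        refine ⟨M, fun N hN => ?_⟩
        rw [← hgs N]
        have h8 := hcompare N
        have h9 := hM N hN
        rw [Real.dist_eq, sub_zero] at h9
        have h10 : (g 0 - θ/2) * u (N+1) < θ/2 := lt_of_abs_lt h9
        linarith
  constructor
  · intro ε hε
    have hγ1ε : 0 < γ₁ ε := classK_pos hγ₁ hε
    obtain ⟨δ, hδpos, hδ⟩ := classK_lt hγ₂ hγ1ε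
    refine ⟨δ, hδpos, fun x hx hxa k => ?_⟩
    have hVa : V a (x a) < γ₁ ε := by
      have h1 : V a (x a) ≤ γ₂ ‖x a‖ := by
        have := (hV 0 (x a)).2
        have e : a + ((0:ℕ):ℝ)*h = a := by norm_num
        rwa [e] at this
      exact lt_of_le_of_lt h1 (hδ _ (norm_nonneg _) hxa)
    have key : ∀ k : ℕ, γ₁ ‖x (a + (k:ℝ)*h)‖ < γ₁ ε := by
      intro k
      match k with
      | 0 =>
        have e : a + ((0:ℕ):ℝ)*h = a := by norm_num
        rw [e]
        have h1 : γ₁ ‖x a‖ ≤ V a (x a) := by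
          have := (hV 0 (x a)).1
          rwa [show a + ((0:ℕ):ℝ)*h = a by norm_num] at this
        linarith
      | (N+1) =>
        have e : a + ((N+1:ℕ):ℝ)*h = a + ((N:ℝ)+1)*h := by push_cast; ring
        rw [e]
        have h1 : γ₁ ‖x (a + ((N:ℝ)+1)*h)‖ ≤ V (a + ((N:ℝ)+1)*h) (x (a + ((N:ℝ)+1)*h)) := by
          have := (hV (N+1) (x (a + ((N+1:ℕ):ℝ)*h))).1
          rwa [e] at this
        have h2 := (core x hx).1 N
        linarith
    by_contra hge
    push_neg at hge
    exact absurd (key k) (not_lt.mpr (classK_le hγ₁ hε.le (norm_nonneg _) hge))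
  · refine ⟨1, one_pos, fun x hx _ => ?_⟩
    rw [tendsto_zero_iff_norm_tendsto_zero]
    rw [Metric.tendsto_atTop]
    intro ρ hρ
    have hγ1ρ : 0 < γ₁ ρ := classK_pos hγ₁ hρ
    obtain ⟨M, hM⟩ := (core x hx).2 (γ₁ ρ) hγ1ρ
    refine ⟨M+1, fun k hk => ?_⟩
    obtain ⟨N, rfl⟩ : ∃ N, k = N+1 := ⟨k-1, by omega⟩
    have hNM : N ≥ M := by omega
    have e : a + ((N+1:ℕ):ℝ)*h = a + ((N:ℝ)+1)*h := by push_cast; ring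
    have h1 : γ₁ ‖x (a + ((N:ℝ)+1)*h)‖ ≤ V (a + ((N:ℝ)+1)*h) (x (a + ((N:ℝ)+1)*h)) := by
      have := (hV (N+1) (x (a + ((N+1:ℕ):ℝ)*h))).1
      rwa [e] at this
    have h2 := hM N hNM
    have h3 : ‖x (a + ((N:ℝ)+1)*h)‖ < ρ := by
      by_contra hge
      push_neg at hge
      exact absurd (lt_of_le_of_lt h1 h2) (not_lt.mpr (classK_le hγ₁ hρ.le (norm_nonneg _) hge))
    rw [Real.dist_eq, sub_zero, abs_of_nonneg (norm_nonneg _), e]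
    exact h3
end

section
/- Let h>0, a∈ℝ, ν∈(0,1], and let x,y:(hℕ)_a→ℝ. If (_aΔ_h^ν x)(t) ≥ (_aΔ_h^ν y)(t) for all t∈(hℕ)_{a+(1−ν)h} and x(a) ≤ y(a), then x(t)−y(t) ≥ x(a)−y(a) for all t∈(hℕ)_a. -/
open Finset Filter Matrix

/-- The fractional `h`-sum of order `μ > 0` of `y : (hℕ)_a → ℝ`, evaluated at the
grid point `t = a + μh + k·h` of `(hℕ)_{a+μh}`. -/
noncomputable def hSum (h a μ : ℝ) (y : ℝ → ℝ) (k : ℕ) : ℝ :=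
  (h / Real.Gamma μ) *
    ∑ j ∈ Finset.range (k + 1),
      hfact h (a + μ * h + (k : ℝ) * h - (a + (j : ℝ) * h + h)) (μ - 1) * y (a + (j : ℝ) * h)

/-- The Riemann–Liouville-like `h`-difference of order `ν ∈ (0,1]` of `y : (hℕ)_a → ℝ`,
evaluated at the grid point `t = a + (1-ν)h + k·h` of `(hℕ)_{a+(1-ν)h}`:
for `ν ∈ (0,1)` it is `Δ_h` applied to the `(1-ν)`-fractional `h`-sum. -/
noncomputable def rlD (h a ν : ℝ) (y : ℝ → ℝ) (k : ℕ) : ℝ :=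
  if ν = 1 then fdiff h y (a + (k : ℝ) * h)
  else (hSum h a (1 - ν) y (k + 1) - hSum h a (1 - ν) y k) / h

noncomputable def bcoef (μ : ℝ) (m : ℕ) : ℝ :=
  Real.Gamma (μ + m) / (Real.Gamma μ * m.factorial)

lemma bcoef_pos {μ : ℝ} (hμ : 0 < μ) (m : ℕ) : 0 < bcoef μ m := by
  apply div_pos
  · exact Real.Gamma_pos_of_pos (by positivity)
  · exact mul_pos (Real.Gamma_pos_of_pos hμ) (by positivity)

lemma bcoef_zero {μ : ℝ} (hμ : 0 < μ) : bcoef μ 0 = 1 := by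
  have := (Real.Gamma_pos_of_pos hμ).ne'
  simp [bcoef, div_self, this]

lemma bcoef_succ {μ : ℝ} (hμ : 0 < μ) (m : ℕ) :
    bcoef μ (m + 1) = bcoef μ m * ((μ + m) / (m + 1)) := by
  have h1 : Real.Gamma (μ + (m + 1 : ℕ)) = (μ + m) * Real.Gamma (μ + m) := by
    have : (μ + (m + 1 : ℕ) : ℝ) = (μ + m) + 1 := by push_cast; ring
    rw [this, Real.Gamma_add_one (by positivity)]
  rw [bcoef, bcoef, h1, Nat.factorial_succ]
  push_cast
  field_simp

lemma bcoef_succ_le {μ : ℝ} (hμ : 0 < μ) (hμ1 : μ ≤ 1) (m : ℕ) :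
    bcoef μ (m + 1) ≤ bcoef μ m := by
  rw [bcoef_succ hμ m]
  have hb := bcoef_pos hμ m
  have : (μ + m) / (m + 1) ≤ 1 := by
    rw [div_le_one (by positivity)]
    linarith
  nlinarith

lemma hfact_grid {h : ℝ} (hh : 0 < h) (μ : ℝ) (m : ℕ) :
    hfact h ((μ + m - 1) * h) (μ - 1) = h ^ (μ - 1) * Real.Gamma (μ + m) / m.factorial := by
  have h1 : (μ + m - 1) * h / h = μ + m - 1 := mul_div_cancel_right₀ _ hh.ne'
  rw [hfact, h1]
  have h2 : μ + (m : ℝ) - 1 + 1 = μ + m := by ring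
  rw [h2]
  have h3 : μ + (m : ℝ) - (μ - 1) = (m : ℝ) + 1 := by ring
  rw [h3, Real.Gamma_nat_eq_factorial]

lemma hSum_eq {h : ℝ} (hh : 0 < h) (a μ : ℝ) (y : ℝ → ℝ) (k : ℕ) :
    hSum h a μ y k = h ^ μ * ∑ j ∈ Finset.range (k + 1),
      bcoef μ (k - j) * y (a + (j : ℝ) * h) := by
  rw [hSum, Finset.mul_sum, Finset.mul_sum]
  apply Finset.sum_congr rfl
  intro j hj
  have hjk : j ≤ k := Nat.lt_succ_iff.mp (Finset.mem_range.mp hj)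
  have harg : a + μ * h + (k : ℝ) * h - (a + (j : ℝ) * h + h)
      = (μ + ((k - j : ℕ) : ℝ) - 1) * h := by
    rw [Nat.cast_sub hjk]; ring
  rw [harg, hfact_grid hh]
  have hpow : h ^ μ = h ^ (μ - 1) * h := by
    rw [show μ = (μ - 1) + 1 by ring, Real.rpow_add_one hh.ne']
    ring_nf
  rw [bcoef, hpow]
  have := Real.Gamma_pos_of_pos (show (0:ℝ) < ((k-j:ℕ):ℝ) + 1 by positivity)
  field_simp

lemma hSum_sub (h a μ : ℝ) (x y : ℝ → ℝ) (k : ℕ) :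
    hSum h a μ (fun t => x t - y t) k = hSum h a μ x k - hSum h a μ y k := by
  rw [hSum, hSum, hSum, ← mul_sub, ← Finset.sum_sub_distrib]
  congr 1
  apply Finset.sum_congr rfl
  intro j _
  ring

theorem stmt5 (h a ν : ℝ) (hh : 0 < h) (hν0 : 0 < ν) (hν1 : ν ≤ 1)
    (x y : ℝ → ℝ)
    (hxy : ∀ k : ℕ, rlD h a ν x k ≥ rlD h a ν y k)
    (ha : x a ≤ y a) :
    ∀ k : ℕ, x (a + (k : ℝ) * h) - y (a + (k : ℝ) * h) ≥ x a - y a := by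
  set z : ℝ → ℝ := fun t => x t - y t with hzdef
  have hz0 : z a ≤ 0 := by simp only [hzdef]; linarith
  suffices H : ∀ k : ℕ, z a ≤ z (a + (k : ℝ) * h) by
    intro k; exact H k
  by_cases hν : ν = 1
  · -- integer case
    have step : ∀ k : ℕ, z (a + (k : ℝ) * h) ≤ z (a + (k : ℝ) * h + h) := by
      intro k
      have h1 := hxy k
      rw [rlD, rlD, if_pos hν, if_pos hν, fdiff, fdiff, ge_iff_le,
        div_le_div_iff_of_pos_right hh] at h1
      simp only [hzdef]
      linarith
    intro k
    induction k with
    | zero => simp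
    | succ n ih =>
      have := step n
      have hc : a + ((n + 1 : ℕ) : ℝ) * h = a + (n : ℝ) * h + h := by push_cast; ring
      rw [hc]
      linarith
  · -- fractional case
    set μ : ℝ := 1 - ν with hμdef
    have hμ0 : 0 < μ := by
      have : ν < 1 := lt_of_le_of_ne hν1 hν
      simp only [hμdef]; linarith
    have hμ1 : μ ≤ 1 := by simp only [hμdef]; linarith
    set T : ℕ → ℝ := fun k => ∑ j ∈ Finset.range (k + 1),
      bcoef μ (k - j) * z (a + (j : ℝ) * h) with hTdef
    have hpow : (0:ℝ) < h ^ μ := Real.rpow_pos_of_pos hh μ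
    have key : ∀ k : ℕ, T k ≤ T (k + 1) := by
      intro k
      have h1 := hxy k
      rw [rlD, rlD, if_neg hν, if_neg hν, ge_iff_le,
        div_le_div_iff_of_pos_right hh] at h1
      have h2 : hSum h a μ z k ≤ hSum h a μ z (k + 1) := by
        rw [hSum_sub, hSum_sub]
        simp only [← hμdef] at h1
        linarith
      rw [hSum_eq hh, hSum_eq hh] at h2
      exact le_of_mul_le_mul_left h2 hpow
    intro k
    induction k using Nat.strong_induction_on with
    | _ k IH =>
      match k with
      | 0 => simp
      | (n + 1) =>
        have hT := key n
        have hsplit : T (n + 1) = (∑ j ∈ Finset.range (n + 1),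
            bcoef μ (n + 1 - j) * z (a + (j : ℝ) * h))
            + z (a + ((n + 1 : ℕ) : ℝ) * h) := by
          rw [hTdef]
          simp only
          rw [Finset.sum_range_succ, Nat.sub_self, bcoef_zero hμ0, one_mul]
        have hdiff : T n - (∑ j ∈ Finset.range (n + 1),
            bcoef μ (n + 1 - j) * z (a + (j : ℝ) * h))
            = ∑ j ∈ Finset.range (n + 1),
              (bcoef μ (n - j) - bcoef μ (n - j + 1)) * z (a + (j : ℝ) * h) := by
          rw [hTdef, ← Finset.sum_sub_distrib]
          apply Finset.sum_congr rfl
          intro j hj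
          have hjn : j ≤ n := Nat.lt_succ_iff.mp (Finset.mem_range.mp hj)
          have : n + 1 - j = (n - j) + 1 := by omega
          rw [this]
          ring
        have hlow : (1 - bcoef μ (n + 1)) * z a
            ≤ ∑ j ∈ Finset.range (n + 1),
              (bcoef μ (n - j) - bcoef μ (n - j + 1)) * z (a + (j : ℝ) * h) := by
          have hsum : ∑ j ∈ Finset.range (n + 1),
              (bcoef μ (n - j) - bcoef μ (n - j + 1)) = 1 - bcoef μ (n + 1) := by
            have hre := Finset.sum_range_reflect
              (fun m => bcoef μ m - bcoef μ (m + 1)) (n + 1)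
            have : ∀ j ∈ Finset.range (n + 1),
                bcoef μ (n + 1 - 1 - j) - bcoef μ (n + 1 - 1 - j + 1)
                = bcoef μ (n - j) - bcoef μ (n - j + 1) := by
              intro j hj; congr 2
            rw [Finset.sum_congr rfl this] at hre
            rw [hre, Finset.sum_range_sub' (fun m => bcoef μ m) (n + 1),
              bcoef_zero hμ0]
          rw [← hsum, Finset.sum_mul]
          apply Finset.sum_le_sum
          intro j hj
          have hjn : j ≤ n := Nat.lt_succ_iff.mp (Finset.mem_range.mp hj)
          have hd : 0 ≤ bcoef μ (n - j) - bcoef μ (n - j + 1) := by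
            have := bcoef_succ_le hμ0 hμ1 (n - j)
            linarith
          have hzj : z a ≤ z (a + (j : ℝ) * h) := IH j (by omega)
          exact mul_le_mul_of_nonneg_left hzj hd
        have hb := bcoef_pos hμ0 (n + 1)
        have hbz : bcoef μ (n + 1) * z a ≤ 0 :=
          mul_nonpos_of_nonneg_of_nonpos hb.le hz0
        linarith [hlow, hdiff, hT, hsplit]
end

section
/- Let h>0, a∈ℝ, ν∈(0,1], n∈ℕ with n≥1, let P∈ℝ^{n×n} be a symmetric positive definite matrix, and let y:(hℕ)_a→ℝⁿ. Then (1/2)·(_aΔ_h^ν (yᵀPy))(t) ≤ y(t+νh)ᵀ·P·(_aΔ_h^ν y)(t) for all t∈(hℕ)_{a+(1−ν)h}. -/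
open Finset Filter Matrix

/-!
Away from `ν = 1`, the Riemann–Liouville `h`-difference at the grid point `t` is a combination
`A y(t + νh) - ∑ⱼ bⱼ y(a + jh)` whose memory weights `bⱼ` are nonnegative (the ratios
`Γ(m + μ)/Γ(m + 1)` decrease in `m` for `0 < μ ≤ 1`) and telescope to at most `A`; for `ν = 1`
it is the forward difference, of the same shape. For any such combination and any positive
semidefinite `P`, the polarisation `q(z - x) = q z - 2 zᵀPx + q x` of `q v = vᵀPv` gives
`zᵀP(Az - ∑ bⱼxⱼ) - ½(A q z - ∑ bⱼ q xⱼ) = ½(A - ∑ bⱼ) q z + ½ ∑ bⱼ q(z - xⱼ) ≥ 0`.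
-/

lemma Matrix.PosSemidef.half_weighted_sub_le {ι m : Type*} [Fintype m] {P : Matrix m m ℝ}
    (hP : P.PosSemidef) (s : Finset ι) (A : ℝ) (b : ι → ℝ) (hb : ∀ j ∈ s, 0 ≤ b j)
    (hA : ∑ j ∈ s, b j ≤ A) (z : m → ℝ) (x : ι → m → ℝ) :
    1 / 2 * (A * (z ⬝ᵥ P *ᵥ z) - ∑ j ∈ s, b j * (x j ⬝ᵥ P *ᵥ x j))
      ≤ z ⬝ᵥ P *ᵥ (A • z - ∑ j ∈ s, b j • x j) := by
  have hq : ∀ v : m → ℝ, 0 ≤ v ⬝ᵥ P *ᵥ v := fun v => by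
    simpa using hP.dotProduct_mulVec_nonneg v
  have hpolar : ∀ u v : m → ℝ,
      (u - v) ⬝ᵥ P *ᵥ (u - v) = u ⬝ᵥ P *ᵥ u - 2 * (u ⬝ᵥ P *ᵥ v) + v ⬝ᵥ P *ᵥ v := by
    intro u v
    have hsymm : v ⬝ᵥ P *ᵥ u = u ⬝ᵥ P *ᵥ v := by
      rw [dotProduct_mulVec, ← mulVec_transpose, isHermitian_iff_isSymm.mp hP.1, dotProduct_comm]
    rw [mulVec_sub, sub_dotProduct, dotProduct_sub, dotProduct_sub, hsymm]
    ring
  have hrhs : z ⬝ᵥ P *ᵥ (A • z - ∑ j ∈ s, b j • x j)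
      = A * (z ⬝ᵥ P *ᵥ z) - ∑ j ∈ s, b j * (z ⬝ᵥ P *ᵥ x j) := by
    simp only [mulVec_sub, mulVec_smul, mulVec_sum, dotProduct_sub, dotProduct_smul,
      dotProduct_sum, smul_eq_mul]
  have hdecomp : z ⬝ᵥ P *ᵥ (A • z - ∑ j ∈ s, b j • x j)
        - 1 / 2 * (A * (z ⬝ᵥ P *ᵥ z) - ∑ j ∈ s, b j * (x j ⬝ᵥ P *ᵥ x j))
      = 1 / 2 * ((A - ∑ j ∈ s, b j) * (z ⬝ᵥ P *ᵥ z)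
          + ∑ j ∈ s, b j * ((z - x j) ⬝ᵥ P *ᵥ (z - x j))) := by
    simp only [hrhs, hpolar, mul_add, mul_sub, sum_add_distrib, sum_sub_distrib, ← sum_mul]
    simp only [mul_left_comm _ (2 : ℝ), ← mul_sum]
    ring
  have hnonneg : 0 ≤ (A - ∑ j ∈ s, b j) * (z ⬝ᵥ P *ᵥ z)
      + ∑ j ∈ s, b j * ((z - x j) ⬝ᵥ P *ᵥ (z - x j)) :=
    add_nonneg (mul_nonneg (sub_nonneg.mpr hA) (hq z))
      (sum_nonneg fun j hj => mul_nonneg (hb j hj) (hq _))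
  linarith

lemma sum_range_reflect_sub {M : Type*} [AddCommGroup M] (f : ℕ → M) (k : ℕ) :
    ∑ j ∈ range (k + 1), (f (k - j) - f (k + 1 - j)) = f 0 - f (k + 1) := by
  have hreflect := sum_range_reflect (fun i => f i - f (i + 1)) (k + 1)
  simp only [Nat.add_sub_cancel] at hreflect
  rw [← sum_range_sub', ← hreflect]
  refine sum_congr rfl fun j hj => ?_
  rw [show k + 1 - j = k - j + 1 by have := mem_range.mp hj; omega]

noncomputable def gammaRatio (μ : ℝ) (m : ℕ) : ℝ := Real.Gamma (m + μ) / Real.Gamma (m + 1)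

lemma gammaRatio_pos {μ : ℝ} (hμ : 0 < μ) (m : ℕ) : 0 < gammaRatio μ m := by
  unfold gammaRatio
  apply div_pos <;> apply Real.Gamma_pos_of_pos <;> positivity

lemma gammaRatio_succ {μ : ℝ} (hμ : 0 < μ) (m : ℕ) :
    gammaRatio μ (m + 1) = (m + μ) / (m + 1) * gammaRatio μ m := by
  have hΓ : Real.Gamma ((m : ℝ) + 1) ≠ 0 := (Real.Gamma_pos_of_pos (by positivity)).ne'
  have hm : (m : ℝ) + 1 ≠ 0 := by positivity
  unfold gammaRatio
  push_cast
  rw [show (m : ℝ) + 1 + μ = m + μ + 1 by ring, Real.Gamma_add_one (by positivity),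
    Real.Gamma_add_one hm]
  field_simp

lemma gammaRatio_antitone {μ : ℝ} (hμ0 : 0 < μ) (hμ1 : μ ≤ 1) : Antitone (gammaRatio μ) := by
  refine antitone_nat_of_succ_le fun m => ?_
  rw [gammaRatio_succ hμ0]
  refine mul_le_of_le_one_left (gammaRatio_pos hμ0 m).le ?_
  rw [div_le_one (by positivity)]
  linarith

lemma hSum_eq_sum_gammaRatio {h : ℝ} (hh : 0 < h) (a μ : ℝ) (f : ℝ → ℝ) (k : ℕ) :
    hSum h a μ f k = h ^ μ / Real.Gamma μ *
      ∑ j ∈ range (k + 1), gammaRatio μ (k - j) * f (a + j * h) := by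
  unfold hSum
  rw [mul_sum, mul_sum]
  refine sum_congr rfl fun j hj => ?_
  have hjk : ((k - j : ℕ) : ℝ) = k - j := Nat.cast_sub (Nat.lt_succ_iff.mp (mem_range.mp hj))
  have harg : (a + μ * h + k * h - (a + j * h + h)) / h + 1 = (k - j : ℕ) + μ := by
    rw [hjk]; field_simp; ring
  have hpow : h ^ μ = h ^ (μ - 1) * h := by
    rw [← Real.rpow_add_one hh.ne', sub_add_cancel]
  have hΓ : Real.Gamma ((k - j : ℕ) + 1) ≠ 0 := (Real.Gamma_pos_of_pos (by positivity)).ne'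
  rw [hfact, harg, show (k - j : ℕ) + μ - (μ - 1) = ((k - j : ℕ) : ℝ) + 1 by ring, gammaRatio,
    hpow]
  field_simp

lemma rlD_one (h a : ℝ) (f : ℝ → ℝ) (k : ℕ) :
    rlD h a 1 f k = h⁻¹ * f (a + (k + 1) * h) - h⁻¹ * f (a + k * h) := by
  rw [rlD, if_pos rfl, fdiff, add_one_mul, add_assoc]
  ring

lemma rlD_eq_of_ne_one {h : ℝ} (hh : 0 < h) (a : ℝ) {ν : ℝ} (hν : ν ≠ 1) (f : ℝ → ℝ) (k : ℕ) :
    rlD h a ν f k = h ^ (1 - ν) / Real.Gamma (1 - ν) / h *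
      (gammaRatio (1 - ν) 0 * f (a + (k + 1) * h)
        - ∑ j ∈ range (k + 1),
            (gammaRatio (1 - ν) (k - j) - gammaRatio (1 - ν) (k + 1 - j)) * f (a + j * h)) := by
  rw [rlD, if_neg hν, hSum_eq_sum_gammaRatio hh, hSum_eq_sum_gammaRatio hh, sum_range_succ,
    Nat.sub_self]
  simp only [sub_mul, sum_sub_distrib]
  push_cast
  ring

lemma exists_rlD_eq_weighted_sub {h ν : ℝ} (hh : 0 < h) (hν0 : 0 < ν) (hν1 : ν ≤ 1) (a : ℝ)
    (k : ℕ) :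
    ∃ (A : ℝ) (b : ℕ → ℝ), (∀ j, 0 ≤ b j) ∧ ∑ j ∈ range (k + 1), b j ≤ A ∧
      ∀ f : ℝ → ℝ,
        rlD h a ν f k = A * f (a + (k + 1) * h) - ∑ j ∈ range (k + 1), b j * f (a + j * h) := by
  rcases hν1.eq_or_lt with rfl | hνlt
  · refine ⟨h⁻¹, fun j => if j = k then h⁻¹ else 0, fun j => ?_, ?_, fun f => ?_⟩
    · dsimp only
      split_ifs <;> positivity
    · simp
    · simp [rlD_one, ite_mul]
  · set c := h ^ (1 - ν) / Real.Gamma (1 - ν) / h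
    have hc : 0 < c := by
      have : 0 < Real.Gamma (1 - ν) := Real.Gamma_pos_of_pos (by linarith)
      positivity
    have hanti := gammaRatio_antitone (μ := 1 - ν) (by linarith) (by linarith)
    refine ⟨c * gammaRatio (1 - ν) 0,
      fun j => c * (gammaRatio (1 - ν) (k - j) - gammaRatio (1 - ν) (k + 1 - j)),
      fun j => mul_nonneg hc.le (sub_nonneg.mpr (hanti (by omega))), ?_, fun f => ?_⟩
    · rw [← mul_sum, sum_range_reflect_sub]
      exact mul_le_mul_of_nonneg_left (sub_le_self _ (gammaRatio_pos (by linarith) _).le) hc.le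
    · rw [rlD_eq_of_ne_one hh a hνlt.ne f k, mul_sub, mul_sum]
      simp only [c, mul_assoc]

theorem stmt8_general {n : ℕ} (h a ν : ℝ) (hh : 0 < h) (hν0 : 0 < ν) (hν1 : ν ≤ 1)
    (P : Matrix (Fin n) (Fin n) ℝ) (hP : P.PosDef)
    (y : ℝ → Fin n → ℝ) :
    ∀ k : ℕ,
      (1 / 2) * rlD h a ν (fun t => y t ⬝ᵥ P.mulVec (y t)) k
        ≤ y (a + ((k : ℝ) + 1) * h) ⬝ᵥ
            P.mulVec (fun i => rlD h a ν (fun t => y t i) k) := by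
  intro k
  obtain ⟨A, b, hb, hA, hrlD⟩ := exists_rlD_eq_weighted_sub hh hν0 hν1 a k
  have hvec : (fun i => rlD h a ν (fun t => y t i) k)
      = A • y (a + (k + 1) * h) - ∑ j ∈ range (k + 1), b j • y (a + j * h) := by
    funext i
    simp [hrlD]
  rw [hrlD, hvec]
  exact hP.posSemidef.half_weighted_sub_le _ A b (fun j _ => hb j) hA _ _

theorem stmt8 {n : ℕ} (hn : 1 ≤ n) (h a ν : ℝ) (hh : 0 < h) (hν0 : 0 < ν) (hν1 : ν ≤ 1)
    (P : Matrix (Fin n) (Fin n) ℝ) (hPsym : P.IsSymm) (hP : P.PosDef)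
    (y : ℝ → Fin n → ℝ) :
    ∀ k : ℕ,
      (1 / 2) * rlD h a ν (fun t => y t ⬝ᵥ P.mulVec (y t)) k
        ≤ y (a + ((k : ℝ) + 1) * h) ⬝ᵥ
            P.mulVec (fun i => rlD h a ν (fun t => y t i) k) :=
  stmt8_general h a ν hh hν0 hν1 P hP y
end

section
/- Let x=0 be an equilibrium of the Riemann–Liouville system, with ν∈(0,1]. Suppose there exist V:(hℕ)_a×ℝⁿ→ℝ and class-K functions γ₁, γ₂, γ₃ such that γ₁(‖z‖) ≤ V(t,z) ≤ γ₂(‖z‖) for all t∈(hℕ)_a and z∈ℝⁿ, and such that along every solution x of the system, (_aΔ_h^ν V)(t,x(t)) ≤ −γ₃(‖x(t+νh)‖) for all t∈(hℕ)_{a+(1−ν)h}. Then the equilibrium x=0 of the Riemann–Liouville system is asymptotically stable. -/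
open Finset Filter Matrix

/-- `x : (hℕ)_a → ℝⁿ` is a solution of the Riemann–Liouville system
`(_aΔ_h^ν x)(t) = f(t, x(t+νh))` on `(hℕ)_{a+(1-ν)h}` (componentwise). -/
def IsRLSol {n : ℕ} (h a ν : ℝ) (f : ℝ → (Fin n → ℝ) → (Fin n → ℝ))
    (x : ℝ → Fin n → ℝ) : Prop :=
  ∀ (k : ℕ) (i : Fin n),
    rlD h a ν (fun t => x t i) k
      = f (a + (1 - ν) * h + (k : ℝ) * h) (x (a + ((k : ℝ) + 1) * h)) i

/-!
The Riemann–Liouville difference is the forward difference of `S = Δ_h^{-(1-ν)} (V ∘ x)`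
(of `V ∘ x` itself when `ν = 1`), so the decrease hypothesis reads
`S (k+1) + h γ₃ ‖x_{k+1}‖ ≤ S k`. All Gamma weights in `S k` are positive and the last one
cancels `Γ(1-ν)`, so `h^{1-ν} V(x_k) ≤ S k ≤ S 0 = h^{1-ν} V(x_0)`, which gives
`γ₁ ‖x_k‖ ≤ γ₂ ‖x_0‖` and hence stability. Telescoping bounds `∑ γ₃ ‖x_{k+1}‖` by `S 0 / h`,
so `γ₃ ‖x_k‖ → 0` and therefore `x_k → 0`, for every initial value.
-/

namespace IsClassK

variable {γ : ℝ → ℝ}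

lemma pos (hγ : IsClassK γ) {r : ℝ} (hr : 0 < r) : 0 < γ r := by
  simpa [hγ.2.1] using hγ.2.2.1 Set.self_mem_Ici hr.le hr

lemma lt_of_apply_lt (hγ : IsClassK γ) {r s : ℝ} (hr : 0 ≤ r) (hs : 0 ≤ s)
    (hrs : γ r < γ s) : r < s :=
  (hγ.2.2.1.lt_iff_lt hr hs).mp hrs

lemma exists_pos_forall_lt (hγ : IsClassK γ) {c : ℝ} (hc : 0 < c) :
    ∃ δ > 0, ∀ r, 0 ≤ r → r < δ → γ r < c := by
  obtain ⟨δ, hδ, hlt⟩ := Metric.continuousWithinAt_iff.mp (hγ.1 0 Set.self_mem_Ici) c hc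
  refine ⟨δ, hδ, fun r hr hrδ => ?_⟩
  have := hlt (Set.mem_Ici.mpr hr) (by rwa [Real.dist_0_eq_abs, abs_of_nonneg hr])
  rw [hγ.2.1, Real.dist_0_eq_abs] at this
  exact (le_abs_self _).trans_lt this

lemma tendsto_zero_of_tendsto_apply (hγ : IsClassK γ) {u : ℕ → ℝ} (hu : ∀ k, 0 ≤ u k)
    (hγu : Tendsto (fun k => γ (u k)) atTop (nhds 0)) : Tendsto u atTop (nhds 0) := by
  refine tendsto_order.2 ⟨fun c hc => Eventually.of_forall fun k => hc.trans_le (hu k),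
    fun ε hε => ?_⟩
  filter_upwards [(tendsto_order.1 hγu).2 _ (hγ.pos hε)] with k hk
  exact hγ.lt_of_apply_lt (hu k) hε.le hk

end IsClassK

lemma hSum_eq_sum {h : ℝ} (hh : 0 < h) (a μ : ℝ) (y : ℝ → ℝ) (k : ℕ) :
    hSum h a μ y k = h ^ μ / Real.Gamma μ *
      ∑ j ∈ range (k + 1),
        Real.Gamma ((k : ℝ) - j + μ) / Real.Gamma ((k : ℝ) - j + 1) * y (a + (j : ℝ) * h) := by
  unfold hSum hfact
  rw [mul_sum, mul_sum]
  refine sum_congr rfl fun j _ => ?_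
  have harg : (a + μ * h + (k : ℝ) * h - (a + (j : ℝ) * h + h)) / h + 1 = (k : ℝ) - j + μ := by
    field_simp
    ring
  rw [harg, show (k : ℝ) - j + μ - (μ - 1) = k - j + 1 by ring, Real.rpow_sub_one hh.ne']
  field_simp

lemma hSum_zero {h : ℝ} (hh : 0 < h) (a : ℝ) {μ : ℝ} (hμ : 0 < μ) (y : ℝ → ℝ) :
    hSum h a μ y 0 = h ^ μ * y a := by
  rw [hSum_eq_sum hh]
  simp only [zero_add, range_one, sum_singleton, Nat.cast_zero, sub_zero, Real.Gamma_one,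
    zero_mul, add_zero]
  field_simp [(Real.Gamma_pos_of_pos hμ).ne']

lemma mul_le_hSum {h : ℝ} (hh : 0 < h) (a : ℝ) {μ : ℝ} (hμ : 0 < μ) {y : ℝ → ℝ}
    (hy : ∀ j : ℕ, 0 ≤ y (a + (j : ℝ) * h)) (k : ℕ) :
    h ^ μ * y (a + (k : ℝ) * h) ≤ hSum h a μ y k := by
  have hΓμ := Real.Gamma_pos_of_pos hμ
  have hearlier : 0 ≤ ∑ j ∈ range k,
      Real.Gamma ((k : ℝ) - j + μ) / Real.Gamma ((k : ℝ) - j + 1) * y (a + (j : ℝ) * h) := by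
    refine sum_nonneg fun j hj => mul_nonneg (div_nonneg ?_ ?_) (hy j)
    all_goals
      have : (j : ℝ) ≤ k := by exact_mod_cast (mem_range.mp hj).le
      exact (Real.Gamma_pos_of_pos (by linarith)).le
  rw [hSum_eq_sum hh, sum_range_succ, sub_self, zero_add, zero_add, Real.Gamma_one, div_one,
    mul_add]
  have hlast : h ^ μ / Real.Gamma μ * (Real.Gamma μ * y (a + (k : ℝ) * h)) =
      h ^ μ * y (a + (k : ℝ) * h) := by
    field_simp
  rw [hlast, le_add_iff_nonneg_left]
  exact mul_nonneg (div_nonneg (Real.rpow_pos_of_pos hh μ).le hΓμ.le) hearlier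

lemma tendsto_atTop_zero_of_add_mul_le {h : ℝ} (hh : 0 < h) {S w : ℕ → ℝ}
    (hS : ∀ k, 0 ≤ S k) (hw : ∀ k, 0 ≤ w k) (hstep : ∀ k, S (k + 1) + h * w k ≤ S k) :
    Tendsto w atTop (nhds 0) := by
  have htelescope : ∀ N, S N + h * ∑ m ∈ range N, w m ≤ S 0 := by
    intro N
    induction N with
    | zero => simp
    | succ N ih =>
      rw [sum_range_succ, mul_add]
      linarith [hstep N]
  refine (summable_of_sum_range_le (c := S 0 / h) hw fun N => ?_).tendsto_atTop_zero
  rw [le_div_iff₀' hh]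
  linarith [htelescope N, hS N]

noncomputable def rlSum (h a ν : ℝ) (y : ℝ → ℝ) (k : ℕ) : ℝ :=
  if ν = 1 then y (a + (k : ℝ) * h) else hSum h a (1 - ν) y k

lemma rlD_eq_sub_div (h a ν : ℝ) (y : ℝ → ℝ) (k : ℕ) :
    rlD h a ν y k = (rlSum h a ν y (k + 1) - rlSum h a ν y k) / h := by
  unfold rlD rlSum fdiff
  split_ifs
  · rw [Nat.cast_succ, add_one_mul, add_assoc]
  · rfl

lemma rlSum_zero {h : ℝ} (hh : 0 < h) (a : ℝ) {ν : ℝ} (hν : ν ≤ 1) (y : ℝ → ℝ) :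
    rlSum h a ν y 0 = h ^ (1 - ν) * y a := by
  unfold rlSum
  split_ifs with hν1
  · simp [hν1]
  · exact hSum_zero hh a (sub_pos.2 (hν.lt_of_ne hν1)) y

lemma mul_le_rlSum {h : ℝ} (hh : 0 < h) (a : ℝ) {ν : ℝ} (hν : ν ≤ 1) {y : ℝ → ℝ}
    (hy : ∀ j : ℕ, 0 ≤ y (a + (j : ℝ) * h)) (k : ℕ) :
    h ^ (1 - ν) * y (a + (k : ℝ) * h) ≤ rlSum h a ν y k := by
  unfold rlSum
  split_ifs with hν1
  · simp [hν1]
  · exact mul_le_hSum hh a (sub_pos.2 (hν.lt_of_ne hν1)) hy k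

lemma le_of_rlD_le_neg {h a ν : ℝ} (hh : 0 < h) (hν : ν ≤ 1) {y : ℝ → ℝ} {w : ℕ → ℝ}
    (hy : ∀ k : ℕ, 0 ≤ y (a + (k : ℝ) * h)) (hw : ∀ k, 0 ≤ w k)
    (hD : ∀ k, rlD h a ν y k ≤ -w k) :
    (∀ k : ℕ, y (a + (k : ℝ) * h) ≤ y a) ∧ Tendsto w atTop (nhds 0) := by
  set S := rlSum h a ν y
  have hC : 0 < h ^ (1 - ν) := Real.rpow_pos_of_pos hh _
  have hstep : ∀ k, S (k + 1) + h * w k ≤ S k := fun k => by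
    have := (div_le_iff₀ hh).mp ((rlD_eq_sub_div h a ν y k).symm.trans_le (hD k))
    linarith
  have hS_anti : Antitone S :=
    antitone_nat_of_succ_le fun k => by linarith [hstep k, mul_nonneg hh.le (hw k)]
  have hS_nonneg : ∀ k, 0 ≤ S k :=
    fun k => (mul_nonneg hC.le (hy k)).trans (mul_le_rlSum hh a hν hy k)
  refine ⟨fun k => le_of_mul_le_mul_left ?_ hC,
    tendsto_atTop_zero_of_add_mul_le hh hS_nonneg hw hstep⟩
  calc h ^ (1 - ν) * y (a + (k : ℝ) * h) ≤ S k := mul_le_rlSum hh a hν hy k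
    _ ≤ S 0 := hS_anti (Nat.zero_le k)
    _ = h ^ (1 - ν) * y a := rlSum_zero hh a hν y

lemma classK_bounds_of_rlD_le_neg {n : ℕ} {h a ν : ℝ} (hh : 0 < h) (hν : ν ≤ 1)
    {V : ℝ → (Fin n → ℝ) → ℝ} {γ₁ γ₂ γ₃ : ℝ → ℝ}
    (hγ₁ : IsClassK γ₁) (hγ₃ : IsClassK γ₃)
    (hV : ∀ (k : ℕ) (z : Fin n → ℝ),
      γ₁ ‖z‖ ≤ V (a + (k : ℝ) * h) z ∧ V (a + (k : ℝ) * h) z ≤ γ₂ ‖z‖)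
    {x : ℝ → Fin n → ℝ}
    (hdec : ∀ k : ℕ, rlD h a ν (fun t => V t (x t)) k ≤ -γ₃ ‖x (a + ((k : ℝ) + 1) * h)‖) :
    (∀ k : ℕ, γ₁ ‖x (a + (k : ℝ) * h)‖ ≤ γ₂ ‖x a‖) ∧
      Tendsto (fun k : ℕ => x (a + (k : ℝ) * h)) atTop (nhds 0) := by
  obtain ⟨hV_le, hγ₃_tendsto⟩ := le_of_rlD_le_neg hh hν
    (fun k => (hγ₁.2.2.2 _ (norm_nonneg _)).trans (hV k _).1)
    (fun k => hγ₃.2.2.2 _ (norm_nonneg _)) hdec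
  refine ⟨fun k => ?_, ?_⟩
  · calc γ₁ ‖x (a + (k : ℝ) * h)‖ ≤ V (a + (k : ℝ) * h) (x (a + (k : ℝ) * h)) := (hV k _).1
      _ ≤ V a (x a) := hV_le k
      _ ≤ γ₂ ‖x a‖ := by simpa using (hV 0 (x a)).2
  · refine tendsto_zero_iff_norm_tendsto_zero.mpr ((tendsto_add_atTop_iff_nat 1).mp ?_)
    push_cast
    exact hγ₃.tendsto_zero_of_tendsto_apply (fun _ => norm_nonneg _) hγ₃_tendsto

theorem stmt9_general {n : ℕ} (h a ν : ℝ) (hh : 0 < h) (hν1 : ν ≤ 1)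
    (f : ℝ → (Fin n → ℝ) → (Fin n → ℝ))
    (V : ℝ → (Fin n → ℝ) → ℝ) (γ₁ γ₂ γ₃ : ℝ → ℝ)
    (hγ₁ : IsClassK γ₁) (hγ₂ : IsClassK γ₂) (hγ₃ : IsClassK γ₃)
    (hV : ∀ (k : ℕ) (z : Fin n → ℝ),
      γ₁ ‖z‖ ≤ V (a + (k : ℝ) * h) z ∧ V (a + (k : ℝ) * h) z ≤ γ₂ ‖z‖)
    (hdec : ∀ x : ℝ → Fin n → ℝ, IsRLSol h a ν f x →
      ∀ k : ℕ, rlD h a ν (fun t => V t (x t)) k ≤ -γ₃ ‖x (a + ((k : ℝ) + 1) * h)‖) :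
    (∀ ε > (0 : ℝ), ∃ δ > (0 : ℝ), ∀ x : ℝ → Fin n → ℝ,
      IsRLSol h a ν f x → ‖x a‖ < δ → ∀ k : ℕ, ‖x (a + (k : ℝ) * h)‖ < ε) ∧
    (∃ δ > (0 : ℝ), ∀ x : ℝ → Fin n → ℝ,
      IsRLSol h a ν f x → ‖x a‖ < δ →
        Tendsto (fun k : ℕ => x (a + (k : ℝ) * h)) atTop (nhds 0)) := by
  have hbounds := fun x (hx : IsRLSol h a ν f x) =>
    classK_bounds_of_rlD_le_neg hh hν1 hγ₁ hγ₃ hV (hdec x hx)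
  refine ⟨fun ε hε => ?_, ⟨1, one_pos, fun x hx _ => (hbounds x hx).2⟩⟩
  obtain ⟨δ, hδ, hγ₂_lt⟩ := hγ₂.exists_pos_forall_lt (hγ₁.pos hε)
  refine ⟨δ, hδ, fun x hx hxa k => hγ₁.lt_of_apply_lt (norm_nonneg _) hε.le ?_⟩
  exact ((hbounds x hx).1 k).trans_lt (hγ₂_lt _ (norm_nonneg _) hxa)

theorem stmt9 {n : ℕ} (hn : 1 ≤ n) (h a ν : ℝ) (hh : 0 < h) (hν0 : 0 < ν) (hν1 : ν ≤ 1)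
    (f : ℝ → (Fin n → ℝ) → (Fin n → ℝ))
    (hf0 : ∀ k : ℕ, f (a + (1 - ν) * h + (k : ℝ) * h) 0 = 0)
    (V : ℝ → (Fin n → ℝ) → ℝ) (γ₁ γ₂ γ₃ : ℝ → ℝ)
    (hγ₁ : IsClassK γ₁) (hγ₂ : IsClassK γ₂) (hγ₃ : IsClassK γ₃)
    (hV : ∀ (k : ℕ) (z : Fin n → ℝ),
      γ₁ ‖z‖ ≤ V (a + (k : ℝ) * h) z ∧ V (a + (k : ℝ) * h) z ≤ γ₂ ‖z‖)
    (hdec : ∀ x : ℝ → Fin n → ℝ, IsRLSol h a ν f x →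
      ∀ k : ℕ, rlD h a ν (fun t => V t (x t)) k ≤ -γ₃ ‖x (a + ((k : ℝ) + 1) * h)‖) :
    (∀ ε > (0 : ℝ), ∃ δ > (0 : ℝ), ∀ x : ℝ → Fin n → ℝ,
      IsRLSol h a ν f x → ‖x a‖ < δ → ∀ k : ℕ, ‖x (a + (k : ℝ) * h)‖ < ε) ∧
    (∃ δ > (0 : ℝ), ∀ x : ℝ → Fin n → ℝ,
      IsRLSol h a ν f x → ‖x a‖ < δ →
        Tendsto (fun k : ℕ => x (a + (k : ℝ) * h)) atTop (nhds 0)) :=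
  stmt9_general h a ν hh hν1 f V γ₁ γ₂ γ₃ hγ₁ hγ₂ hγ₃ hV hdec
end

section
/- Let x=0 be an equilibrium of the Riemann–Liouville system, with ν∈(0,1], and let P∈ℝ^{n×n} be a symmetric positive definite matrix. If zᵀ·P·f(t,z) ≤ 0 for all t∈(hℕ)_{a+(1−ν)h} and all z∈ℝⁿ, then the equilibrium x=0 of the Riemann–Liouville system is stable. -/
/-!
Write `P = BᵀB` with `B = √P`, so that `zᵀPw = ⟪Bz, Bw⟫` and `‖Bz‖` is a norm equivalent to the
given one. Solving the Riemann–Liouville equation for its newest value gives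
`x(k+1) = ∑_{j ≤ k} c_{k-j} x(j) + h^ν f(t_k, x(k+1))`, where the memory coefficients `c_m` are
nonnegative with total mass at most `1` (they are differences of the binomial weights
`Γ(m+1-ν) / (Γ(1-ν) m!)`, which decrease in `m`). Because `x(k+1)ᵀ P f ≤ 0`, removing the forcing
term cannot decrease the `B`-norm, so `‖Bx(k+1)‖ ≤ ‖∑ c_{k-j} Bx(j)‖ ≤ max_{j ≤ k} ‖Bx(j)‖`, and
by strong induction `‖Bx(k)‖ ≤ ‖Bx(0)‖` for all `k`. Norm equivalence turns this into stability.
-/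

open Finset Filter Matrix

theorem norm_le_norm_sub_of_inner_nonpos {E : Type*} [SeminormedAddCommGroup E]
    [InnerProductSpace ℝ E] {v w : E} (h : inner ℝ v w ≤ 0) : ‖v‖ ≤ ‖v - w‖ := by
  refine le_of_sq_le_sq ?_ (norm_nonneg _)
  rw [norm_sub_sq_real]
  nlinarith [sq_nonneg ‖w‖]

theorem norm_le_norm_zero_of_norm_succ_le {E : Type*} [SeminormedAddCommGroup E]
    [NormedSpace ℝ E] {X : ℕ → E} {c : ℕ → ℝ} (hc : ∀ m, 0 ≤ c m)
    (hc_sum : ∀ k, ∑ m ∈ range k, c m ≤ 1)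
    (hX : ∀ k, ‖X (k + 1)‖ ≤ ‖∑ j ∈ range (k + 1), c (k - j) • X j‖) (k : ℕ) :
    ‖X k‖ ≤ ‖X 0‖ := by
  induction k using Nat.strong_induction_on with
  | _ k ih =>
  cases k with
  | zero => exact le_rfl
  | succ k =>
    calc ‖X (k + 1)‖ ≤ ‖∑ j ∈ range (k + 1), c (k - j) • X j‖ := hX k
      _ ≤ ∑ j ∈ range (k + 1), c (k - j) * ‖X j‖ := by
        refine (norm_sum_le _ _).trans_eq (sum_congr rfl fun j _ => ?_)
        rw [norm_smul, Real.norm_of_nonneg (hc _)]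
      _ ≤ ∑ j ∈ range (k + 1), c (k - j) * ‖X 0‖ := by
        gcongr with j hj
        · exact hc _
        · exact ih j (by simpa [Nat.lt_succ_iff] using hj)
      _ = (∑ m ∈ range (k + 1), c m) * ‖X 0‖ := by
        rw [← sum_mul, ← sum_range_reflect c]
        rfl
      _ ≤ ‖X 0‖ := mul_le_of_le_one_left (norm_nonneg _) (hc_sum (k + 1))

theorem ContinuousLinearMap.exists_norm_lt_of_norm_apply_le {E F : Type*} [NormedAddCommGroup E]
    [NormedSpace ℝ E] [FiniteDimensional ℝ E] [NormedAddCommGroup F] [NormedSpace ℝ F]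
    (L : E →L[ℝ] F) (hL : Function.Injective L) {ε : ℝ} (hε : 0 < ε) :
    ∃ δ > 0, ∀ u v : E, ‖L v‖ ≤ ‖L u‖ → ‖u‖ < δ → ‖v‖ < ε := by
  obtain ⟨K, hK, hanti⟩ := (L : E →ₗ[ℝ] F).injective_iff_antilipschitz.1 hL
  refine ⟨ε / (K * (‖L‖ + 1)), by positivity, fun u v hLuv hu => ?_⟩
  calc ‖v‖ ≤ K * ‖L v‖ := L.bound_of_antilipschitz hanti v
    _ ≤ K * ((‖L‖ + 1) * ‖u‖) := by
      gcongr
      exact hLuv.trans ((L.le_opNorm u).trans (by nlinarith [norm_nonneg u]))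
    _ < K * ((‖L‖ + 1) * (ε / (K * (‖L‖ + 1)))) := by gcongr
    _ = ε := by field_simp

theorem Matrix.PosDef.exists_injective_inner_eq_dotProduct_mulVec {ι : Type*} [Fintype ι]
    [DecidableEq ι] {P : Matrix ι ι ℝ} (hP : P.PosDef) :
    ∃ L : (ι → ℝ) →L[ℝ] EuclideanSpace ℝ ι,
      Function.Injective L ∧ ∀ u v, inner ℝ (L u) (L v) = u ⬝ᵥ P *ᵥ v := by
  open scoped MatrixOrder in
  obtain ⟨B, hBt, hBB⟩ : ∃ B : Matrix ι ι ℝ, Bᵀ = B ∧ B * B = P :=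
    ⟨CFC.sqrt P, (CFC.sqrt_nonneg P).isSelfAdjoint.star_eq,
      CFC.sqrt_mul_sqrt_self P hP.posSemidef.nonneg⟩
  let L : (ι → ℝ) →L[ℝ] EuclideanSpace ℝ ι := LinearMap.toContinuousLinearMap
    ((WithLp.linearEquiv 2 ℝ (ι → ℝ)).symm.toLinearMap ∘ₗ B.mulVecLin)
  have hinner : ∀ u v, inner ℝ (L u) (L v) = u ⬝ᵥ P *ᵥ v := fun u v => by
    rw [EuclideanSpace.inner_eq_star_dotProduct, ← hBB, ← mulVec_mulVec, dotProduct_mulVec,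
      ← mulVec_transpose, hBt, dotProduct_comm]
    rfl
  refine ⟨L, (injective_iff_map_eq_zero L).2 fun z hz => ?_, hinner⟩
  by_contra hz0
  have := hP.dotProduct_mulVec_pos hz0
  rw [star_trivial, ← hinner, hz, inner_zero_left] at this
  exact this.false

-- `rlWeight μ m = (m + μ - 1 choose m)`, the weights of the fractional sum.
noncomputable def rlWeight (μ : ℝ) (m : ℕ) : ℝ :=
  Real.Gamma (m + μ) / (Real.Gamma μ * Real.Gamma (m + 1))

section rlWeight

variable {μ : ℝ}

theorem rlWeight_pos (hμ : 0 < μ) (m : ℕ) : 0 < rlWeight μ m := by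
  unfold rlWeight
  positivity

theorem rlWeight_zero (hμ : 0 < μ) : rlWeight μ 0 = 1 := by
  simp [rlWeight, (Real.Gamma_pos_of_pos hμ).ne']

theorem rlWeight_succ (hμ : 0 < μ) (m : ℕ) :
    rlWeight μ (m + 1) = (m + μ) / (m + 1) * rlWeight μ m := by
  have hΓμ := (Real.Gamma_pos_of_pos hμ).ne'
  have hΓ := (Real.Gamma_pos_of_pos (show 0 < (m : ℝ) + 1 by positivity)).ne'
  simp only [rlWeight, Nat.cast_succ, add_right_comm _ (1 : ℝ) μ,
    Real.Gamma_add_one (show (m : ℝ) + μ ≠ 0 by positivity),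
    Real.Gamma_add_one (show (m : ℝ) + 1 ≠ 0 by positivity)]
  field_simp

theorem rlWeight_succ_le (hμ : 0 < μ) (hμ1 : μ ≤ 1) (m : ℕ) :
    rlWeight μ (m + 1) ≤ rlWeight μ m := by
  rw [rlWeight_succ hμ]
  refine mul_le_of_le_one_left (rlWeight_pos hμ m).le ?_
  rw [div_le_one (by positivity)]
  linarith

end rlWeight

theorem hSum_eq_sum_rlWeight {h a μ : ℝ} (hh : 0 < h) (y : ℝ → ℝ) (k : ℕ) :
    hSum h a μ y k = h ^ μ * ∑ j ∈ range (k + 1), rlWeight μ (k - j) * y (a + j * h) := by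
  rw [hSum, mul_sum, mul_sum]
  refine sum_congr rfl fun j hj => ?_
  have hjk : j ≤ k := Nat.lt_succ_iff.mp (mem_range.mp hj)
  have harg : (a + μ * h + k * h - (a + j * h + h)) / h = ((k - j : ℕ) : ℝ) + μ - 1 := by
    rw [Nat.cast_sub hjk]
    field_simp
    ring
  rw [hfact, harg, rlWeight, Real.rpow_sub hh, Real.rpow_one, sub_add_cancel,
    show ((k - j : ℕ) : ℝ) + μ - (μ - 1) = (k - j : ℕ) + 1 by ring]
  field_simp

-- The case `ν = 1` is separate: `rlWeight 0` is junk, since `Real.Gamma 0 = 0`.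
noncomputable def rlKernel (ν : ℝ) (m : ℕ) : ℝ :=
  if ν = 1 then if m = 0 then 1 else 0 else rlWeight (1 - ν) m - rlWeight (1 - ν) (m + 1)

section rlKernel

variable {ν : ℝ}

theorem rlKernel_nonneg (hν0 : 0 ≤ ν) (hν1 : ν ≤ 1) (m : ℕ) : 0 ≤ rlKernel ν m := by
  unfold rlKernel
  split_ifs with hν
  · positivity
  · positivity
  · exact sub_nonneg.2 (rlWeight_succ_le (sub_pos.2 (lt_of_le_of_ne hν1 hν)) (by linarith) m)

theorem sum_range_rlKernel_le_one (hν1 : ν ≤ 1) (k : ℕ) :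
    ∑ m ∈ range k, rlKernel ν m ≤ 1 := by
  unfold rlKernel
  split_ifs with hν
  · rw [sum_ite_eq']
    split_ifs <;> norm_num
  · have hμ : 0 < 1 - ν := sub_pos.2 (lt_of_le_of_ne hν1 hν)
    rw [sum_range_sub', rlWeight_zero hμ]
    linarith [rlWeight_pos hμ k]

end rlKernel

theorem rlD_eq_iff {h a ν F : ℝ} (hh : 0 < h) (hν1 : ν ≤ 1) (y : ℝ → ℝ) (k : ℕ) :
    rlD h a ν y k = F ↔ y (a + (k + 1) * h) =
      ∑ j ∈ range (k + 1), rlKernel ν (k - j) * y (a + j * h) + h ^ ν * F := by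
  unfold rlD
  split_ifs with hν
  · subst hν
    have hlast : ∀ j ∈ range k, rlKernel 1 (k - j) * y (a + j * h) = 0 := fun j hj => by
      simp [rlKernel, Nat.sub_ne_zero_of_lt (mem_range.1 hj)]
    rw [sum_range_succ, sum_eq_zero hlast, fdiff, div_eq_iff hh.ne', add_mul _ 1 h, one_mul,
      ← add_assoc]
    simp only [rlKernel, Nat.sub_self, if_true, one_mul, zero_add, Real.rpow_one]
    constructor <;> intro <;> linarith
  · have hμ : 0 < 1 - ν := sub_pos.2 (lt_of_le_of_ne hν1 hν)
    have hpow : h ^ ν * h ^ (1 - ν) = h := by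
      rw [← Real.rpow_add hh, add_sub_cancel, Real.rpow_one]
    rw [hSum_eq_sum_rlWeight hh, hSum_eq_sum_rlWeight hh, sum_range_succ, Nat.sub_self,
      rlWeight_zero hμ, one_mul]
    have hshift : ∀ j ∈ range (k + 1), rlWeight (1 - ν) (k + 1 - j) * y (a + j * h) =
        rlWeight (1 - ν) (k - j + 1) * y (a + j * h) := fun j hj => by
      rw [Nat.sub_add_comm (Nat.lt_succ_iff.1 (mem_range.1 hj))]
    have hkernel : ∑ j ∈ range (k + 1), rlKernel ν (k - j) * y (a + j * h) =
        ∑ j ∈ range (k + 1), rlWeight (1 - ν) (k - j) * y (a + j * h) -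
          ∑ j ∈ range (k + 1), rlWeight (1 - ν) (k - j + 1) * y (a + j * h) := by
      simp only [rlKernel, hν, if_false, sub_mul, sum_sub_distrib]
    rw [sum_congr rfl hshift, hkernel, Nat.cast_succ, div_eq_iff hh.ne']
    set A := ∑ j ∈ range (k + 1), rlWeight (1 - ν) (k - j + 1) * y (a + j * h)
    set B := ∑ j ∈ range (k + 1), rlWeight (1 - ν) (k - j) * y (a + j * h)
    rw [show h ^ (1 - ν) * (A + y (a + (k + 1) * h)) - h ^ (1 - ν) * B =
        h ^ (1 - ν) * (y (a + (k + 1) * h) - (B - A)) by ring,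
      show F * h = h ^ (1 - ν) * (h ^ ν * F) by linear_combination -F * hpow,
      mul_right_inj' (Real.rpow_pos_of_pos hh _).ne', sub_eq_iff_eq_add']

theorem IsRLSol.eq_sum_rlKernel {n : ℕ} {h a ν : ℝ} {f : ℝ → (Fin n → ℝ) → (Fin n → ℝ)}
    {x : ℝ → Fin n → ℝ} (hx : IsRLSol h a ν f x) (hh : 0 < h) (hν1 : ν ≤ 1) (k : ℕ) :
    x (a + (k + 1 : ℕ) * h) = ∑ j ∈ range (k + 1), rlKernel ν (k - j) • x (a + j * h) +
      h ^ ν • f (a + (1 - ν) * h + k * h) (x (a + (k + 1 : ℕ) * h)) := by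
  funext i
  push_cast
  simp only [Pi.add_apply, Finset.sum_apply, Pi.smul_apply, smul_eq_mul]
  exact (rlD_eq_iff hh hν1 _ k).1 (hx k i)

theorem stmt10_general {n : ℕ} (h a ν : ℝ) (hh : 0 < h) (hν0 : 0 < ν) (hν1 : ν ≤ 1)
    (f : ℝ → (Fin n → ℝ) → (Fin n → ℝ))
    (P : Matrix (Fin n) (Fin n) ℝ) (hP : P.PosDef)
    (hle : ∀ (k : ℕ) (z : Fin n → ℝ),
      z ⬝ᵥ P.mulVec (f (a + (1 - ν) * h + (k : ℝ) * h) z) ≤ 0) :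
    (∀ ε > (0 : ℝ), ∃ δ > (0 : ℝ), ∀ x : ℝ → Fin n → ℝ,
      IsRLSol h a ν f x → ‖x a‖ < δ → ∀ k : ℕ, ‖x (a + (k : ℝ) * h)‖ < ε) := by
  intro ε hε
  obtain ⟨L, hL_inj, hL_inner⟩ := hP.exists_injective_inner_eq_dotProduct_mulVec
  obtain ⟨δ, hδ, hδε⟩ := L.exists_norm_lt_of_norm_apply_le hL_inj hε
  refine ⟨δ, hδ, fun x hx hxa k => hδε _ _ ?_ (by simpa using hxa)⟩
  refine (norm_le_norm_zero_of_norm_succ_le (X := fun k : ℕ => L (x (a + k * h)))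
    (rlKernel_nonneg hν0.le hν1) (sum_range_rlKernel_le_one hν1) (fun k => ?_) k).trans_eq
    (by simp)
  set F := f (a + (1 - ν) * h + k * h) (x (a + (k + 1 : ℕ) * h))
  have hstep := congrArg L (hx.eq_sum_rlKernel hh hν1 k)
  simp only [map_add, map_sum, map_smul] at hstep
  calc ‖L (x (a + (k + 1 : ℕ) * h))‖ ≤ ‖L (x (a + (k + 1 : ℕ) * h)) - h ^ ν • L F‖ := by
        refine norm_le_norm_sub_of_inner_nonpos ?_
        rw [real_inner_smul_right, hL_inner]
        exact mul_nonpos_of_nonneg_of_nonpos (by positivity) (hle k _)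
    _ = _ := by rw [hstep, add_sub_cancel_right]

theorem stmt10 {n : ℕ} (hn : 1 ≤ n) (h a ν : ℝ) (hh : 0 < h) (hν0 : 0 < ν) (hν1 : ν ≤ 1)
    (f : ℝ → (Fin n → ℝ) → (Fin n → ℝ))
    (hf0 : ∀ k : ℕ, f (a + (1 - ν) * h + (k : ℝ) * h) 0 = 0)
    (P : Matrix (Fin n) (Fin n) ℝ) (hPsym : P.IsSymm) (hP : P.PosDef)
    (hle : ∀ (k : ℕ) (z : Fin n → ℝ),
      z ⬝ᵥ P.mulVec (f (a + (1 - ν) * h + (k : ℝ) * h) z) ≤ 0) :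
    (∀ ε > (0 : ℝ), ∃ δ > (0 : ℝ), ∀ x : ℝ → Fin n → ℝ,
      IsRLSol h a ν f x → ‖x a‖ < δ → ∀ k : ℕ, ‖x (a + (k : ℝ) * h)‖ < ε) :=
  stmt10_general h a ν hh hν0 hν1 f P hP hle
end

section
/- Let h>0, a∈ℝ, ν∈(0,1], let y:(hℕ)_a→ℝ satisfy y(t)≥0 for all t∈(hℕ)_a, and let l be an odd integer with l≥3. Then (_aΔ_{h,*}^ν y^l)(t) ≤ l·y(t+νh)^{l−1}·(_aΔ_{h,*}^ν y)(t) for all t∈(hℕ)_{a+(1−ν)h}, where y^l denotes the function t↦y(t)^l. -/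
open Finset Filter Matrix

lemma bern_aux {x z : ℝ} (hx : 0 ≤ x) (hz : 0 ≤ z) {l : ℕ} (hl : 2 ≤ l) :
    x ^ l + (l : ℝ) * x ^ (l - 1) * (z - x) ≤ z ^ l := by
  obtain ⟨m, rfl⟩ : ∃ m, l = m + 2 := ⟨l - 2, by omega⟩
  rcases hx.eq_or_lt with h0 | hxpos
  · subst h0
    simp [pow_succ]
    positivity
  · have hu : (-2 : ℝ) ≤ z / x - 1 := by
      have := div_nonneg hz hxpos.le; linarith
    have hb := one_add_mul_le_pow hu (m + 2)
    have hb2 := mul_le_mul_of_nonneg_left hb (le_of_lt (pow_pos hxpos (m + 2)))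
    have hx0 : x ≠ 0 := ne_of_gt hxpos
    have e1 : x ^ (m + 2) * (1 + ((m + 2 : ℕ) : ℝ) * (z / x - 1))
        = x ^ (m + 2) + ((m + 2 : ℕ) : ℝ) * x ^ (m + 1) * (z - x) := by
      field_simp
      ring
    have e2 : x ^ (m + 2) * (1 + (z / x - 1)) ^ (m + 2) = z ^ (m + 2) := by
      rw [show (1 : ℝ) + (z / x - 1) = z / x by ring, ← mul_pow]
      field_simp
    rw [e1, e2] at hb2
    simpa using hb2

lemma abel_aux (w g : ℕ → ℝ) (hw0 : ∀ j, 0 ≤ w j) (hwm : ∀ j, w j ≤ w (j + 1))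
    (hg : ∀ j, 0 ≤ g j) :
    ∀ k, ∑ j ∈ Finset.range (k + 1), w j * (g (j + 1) - g j) ≤ w k * g (k + 1) := by
  intro k
  induction k with
  | zero =>
    rw [show (0:ℕ)+1 = 1 from rfl, Finset.sum_range_one]
    nlinarith [mul_nonneg (hw0 0) (hg 0)]
  | succ k ih =>
    rw [Finset.sum_range_succ]
    have h1 : w k * g (k + 1) ≤ w (k + 1) * g (k + 1) :=
      mul_le_mul_of_nonneg_right (hwm k) (hg (k + 1))
    nlinarith [ih, h1]

theorem stmt12 (h a ν : ℝ) (hh : 0 < h) (hν0 : 0 < ν) (hν1 : ν ≤ 1)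
    (y : ℝ → ℝ) (hy : ∀ k : ℕ, 0 ≤ y (a + (k : ℝ) * h))
    (l : ℕ) (hl : Odd l) (hl3 : 3 ≤ l) :
    ∀ k : ℕ, caputoD h a ν (fun t => y t ^ l) k
      ≤ (l : ℝ) * y (a + ((k : ℝ) + 1) * h) ^ (l - 1) * caputoD h a ν y k := by
  intro k
  have hl2 : 2 ≤ l := by omega
  have hY : 0 ≤ y (a + ((k : ℝ) + 1) * h) := by
    have := hy (k + 1); push_cast at this; exact this
  set Y := y (a + ((k : ℝ) + 1) * h) with hYdef
  set c : ℝ := (l : ℝ) * Y ^ (l - 1) with hcdef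
  by_cases hv : ν = 1
  · simp only [caputoD, if_pos hv, fdiff]
    have hz : 0 ≤ y (a + (k : ℝ) * h) := hy k
    have hb := bern_aux hY hz hl2
    have hpt : a + (k : ℝ) * h + h = a + ((k : ℝ) + 1) * h := by ring
    rw [hpt, ← mul_div_assoc, ← hYdef, hcdef]
    apply div_le_div_of_nonneg_right _ hh.le
    · linarith
  · have hν : ν < 1 := lt_of_le_of_ne hν1 hv
    simp only [caputoD, if_neg hv]
    set W : ℕ → ℝ := fun m => h ^ (-ν) * Real.Gamma ((m : ℝ) + 1 - ν) / Real.Gamma ((m : ℝ) + 1)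
      with hWdef
    have hW0 : ∀ m : ℕ, 0 < W m := by
      intro m
      have h1 : 0 < (m : ℝ) + 1 - ν := by
        have : (0:ℝ) ≤ (m:ℝ) := Nat.cast_nonneg m
        linarith
      have h2 : (0:ℝ) < (m : ℝ) + 1 := by positivity
      exact div_pos (mul_pos (Real.rpow_pos_of_pos hh _) (Real.Gamma_pos_of_pos h1))
        (Real.Gamma_pos_of_pos h2)
    have hWdec : ∀ m : ℕ, W (m + 1) ≤ W m := by
      intro m
      have hmx : 0 < (m : ℝ) + 1 - ν := by
        have : (0:ℝ) ≤ (m:ℝ) := Nat.cast_nonneg m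
        linarith
      have hm1 : (0:ℝ) < (m : ℝ) + 1 := by positivity
      have e1 : Real.Gamma (((m + 1 : ℕ) : ℝ) + 1 - ν)
          = ((m : ℝ) + 1 - ν) * Real.Gamma ((m : ℝ) + 1 - ν) := by
        push_cast
        rw [show (m : ℝ) + 1 + 1 - ν = ((m : ℝ) + 1 - ν) + 1 by ring, Real.Gamma_add_one hmx.ne']
      have e2 : Real.Gamma (((m + 1 : ℕ) : ℝ) + 1)
          = ((m : ℝ) + 1) * Real.Gamma ((m : ℝ) + 1) := by
        push_cast
        rw [show (m : ℝ) + 1 + 1 = ((m : ℝ) + 1) + 1 by ring, Real.Gamma_add_one hm1.ne']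
      have hΓx : 0 < Real.Gamma ((m : ℝ) + 1 - ν) := Real.Gamma_pos_of_pos hmx
      have hΓm : 0 < Real.Gamma ((m : ℝ) + 1) := Real.Gamma_pos_of_pos hm1
      have hp : 0 < h ^ (-ν) := Real.rpow_pos_of_pos hh _
      simp only [hWdef]
      rw [e1, e2, div_le_div_iff₀ (by positivity) (by positivity)]
      nlinarith [mul_pos hp hΓx, mul_pos hΓx hΓm, mul_pos hp (mul_pos hΓx hΓm)]
    set w : ℕ → ℝ := fun j => W (k - j) with hwdef
    have hw0 : ∀ j, 0 ≤ w j := fun j => (hW0 _).le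
    have hwm : ∀ j, w j ≤ w (j + 1) := by
      intro j
      simp only [hwdef]
      rcases lt_or_ge j k with hjk | hjk
      · have : k - j = (k - (j + 1)) + 1 := by omega
        rw [this]
        exact hWdec _
      · have h1 : k - j = 0 := by omega
        have h2 : k - (j + 1) = 0 := by omega
        rw [h1, h2]
    set g : ℕ → ℝ := fun j => y (a + (j : ℝ) * h) ^ l - Y ^ l - c * (y (a + (j : ℝ) * h) - Y)
      with hgdef
    have hg : ∀ j, 0 ≤ g j := by
      intro j
      have hb := bern_aux hY (hy j) hl2
      simp only [hgdef, hcdef]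
      linarith
    have hgk1 : g (k + 1) = 0 := by
      simp only [hgdef]
      push_cast
      ring
    have habel := abel_aux w g hw0 hwm hg k
    have hsum : ∑ j ∈ Finset.range (k + 1), w j * (g (j + 1) - g j) ≤ 0 := by
      rw [hgk1] at habel
      simpa using habel
    have hA : ∀ j ∈ Finset.range (k + 1),
        hfact h (a + (1 - ν) * h + (k : ℝ) * h - (a + (j : ℝ) * h + h)) (-ν) = w j := by
      intro j hj
      have hjk : j ≤ k := Nat.lt_succ_iff.mp (Finset.mem_range.mp hj)
      have hcast : ((k - j : ℕ) : ℝ) = (k : ℝ) - (j : ℝ) := by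
        push_cast [Nat.cast_sub hjk]; ring
      simp only [hfact, hwdef, hWdef, hcast]
      rw [show a + (1 - ν) * h + (k : ℝ) * h - (a + (j : ℝ) * h + h)
          = ((k : ℝ) - (j : ℝ) - ν) * h by ring,
        mul_div_cancel_right₀ _ hh.ne']
      rw [show (k : ℝ) - (j : ℝ) - ν + 1 - -ν = (k : ℝ) - (j : ℝ) + 1 by ring,
        show (k : ℝ) - (j : ℝ) - ν + 1 = (k : ℝ) - (j : ℝ) + 1 - ν by ring]
    have hterm : ∀ j : ℕ, fdiff h (fun t => y t ^ l) (a + (j : ℝ) * h)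
        = c * fdiff h y (a + (j : ℝ) * h) + (g (j + 1) - g j) / h := by
      intro j
      have hpt : a + (j : ℝ) * h + h = a + ((j : ℝ) + 1) * h := by ring
      simp only [fdiff, hgdef, hpt]
      push_cast
      field_simp
      ring
    have eL : ∑ j ∈ Finset.range (k + 1),
          hfact h (a + (1 - ν) * h + (k : ℝ) * h - (a + (j : ℝ) * h + h)) (-ν) *
            fdiff h (fun t => y t ^ l) (a + (j : ℝ) * h)
        = ∑ j ∈ Finset.range (k + 1), w j * fdiff h (fun t => y t ^ l) (a + (j : ℝ) * h) :=
      Finset.sum_congr rfl (fun j hj => by rw [hA j hj])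
    have eR : ∑ j ∈ Finset.range (k + 1),
          hfact h (a + (1 - ν) * h + (k : ℝ) * h - (a + (j : ℝ) * h + h)) (-ν) *
            fdiff h y (a + (j : ℝ) * h)
        = ∑ j ∈ Finset.range (k + 1), w j * fdiff h y (a + (j : ℝ) * h) :=
      Finset.sum_congr rfl (fun j hj => by rw [hA j hj])
    rw [eL, eR]
    have hC : 0 < h / Real.Gamma (1 - ν) :=
      div_pos hh (Real.Gamma_pos_of_pos (by linarith))
    have h1 : ∑ j ∈ Finset.range (k + 1), w j * fdiff h (fun t => y t ^ l) (a + (j : ℝ) * h)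
        ≤ c * ∑ j ∈ Finset.range (k + 1), w j * fdiff h y (a + (j : ℝ) * h) := by
      have e : ∑ j ∈ Finset.range (k + 1), w j * fdiff h (fun t => y t ^ l) (a + (j : ℝ) * h)
          = c * (∑ j ∈ Finset.range (k + 1), w j * fdiff h y (a + (j : ℝ) * h))
            + (1 / h) * ∑ j ∈ Finset.range (k + 1), w j * (g (j + 1) - g j) := by
        rw [Finset.mul_sum, Finset.mul_sum, ← Finset.sum_add_distrib]
        apply Finset.sum_congr rfl
        intro j _
        rw [hterm j]
        field_simp
      rw [e]
      have h2 : (1 / h) * ∑ j ∈ Finset.range (k + 1), w j * (g (j + 1) - g j) ≤ 0 := by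
        have hpos : (0:ℝ) ≤ 1 / h := by positivity
        exact mul_nonpos_of_nonneg_of_nonpos hpos hsum
      linarith
    calc h / Real.Gamma (1 - ν)
          * ∑ j ∈ Finset.range (k + 1), w j * fdiff h (fun t => y t ^ l) (a + (j : ℝ) * h)
        ≤ h / Real.Gamma (1 - ν)
          * (c * ∑ j ∈ Finset.range (k + 1), w j * fdiff h y (a + (j : ℝ) * h)) :=
          mul_le_mul_of_nonneg_left h1 hC.le
      _ = c * (h / Real.Gamma (1 - ν)
          * ∑ j ∈ Finset.range (k + 1), w j * fdiff h y (a + (j : ℝ) * h)) := by ring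
end

section
/- Let h>0, a∈ℝ, ν∈(0,1], let y:(hℕ)_a→ℝ, and let m be a positive integer. Then (_aΔ_{h,*}^ν y^{2^m})(t) ≤ 2^m·y(t+νh)^{2^m−1}·(_aΔ_{h,*}^ν y)(t) for all t∈(hℕ)_{a+(1−ν)h}, where y^{2^m} denotes the function t↦y(t)^{2^m}. -/
open Finset Filter Matrix

/-! Since `2 ^ m` is even, `x ↦ x ^ 2 ^ m` is convex and lies above its tangent line at
`b = y (t + ν h)`. Hence the gap `g_j` between `y (a + j h) ^ 2 ^ m` and that tangent line is
nonnegative and vanishes at the last grid point `a + (k + 1) h = t + ν h`. The difference of the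
two sides of the inequality is a positive multiple of `∑ w_j (g_{j+1} - g_j)`, where the weights
`w_j = (t - σ(j h))_h^(-ν)` are positive and nondecreasing in `j`; summing by parts, this sum is
at most `w_k g_{k+1} = 0`. -/

theorem ConvexOn.add_mul_sub_le_of_hasDerivAt {f : ℝ → ℝ} {f' b : ℝ}
    (hf : ConvexOn ℝ Set.univ f) (hd : HasDerivAt f f' b) (c : ℝ) :
    f b + f' * (c - b) ≤ f c := by
  rcases lt_trichotomy b c with hbc | rfl | hcb
  · have := hf.le_slope_of_hasDerivAt trivial trivial hbc hd
    rw [slope_def_field, le_div_iff₀ (sub_pos.mpr hbc)] at this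
    linarith
  · simp
  · have := hf.slope_le_of_hasDerivAt trivial trivial hcb hd
    rw [slope_def_field, div_le_iff₀ (sub_pos.mpr hcb)] at this
    linarith

theorem sum_mul_sub_le_mul_of_monotone (w g : ℕ → ℝ) (n : ℕ) (hw0 : 0 ≤ w 0)
    (hw : ∀ j < n, w j ≤ w (j + 1)) (hg : ∀ j ≤ n, 0 ≤ g j) :
    ∑ j ∈ range (n + 1), w j * (g (j + 1) - g j) ≤ w n * g (n + 1) := by
  induction n with
  | zero => simpa [mul_sub] using mul_nonneg hw0 (hg 0 le_rfl)
  | succ n ih =>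
    have hprev := ih (fun j hj => hw j (by omega)) (fun j hj => hg j (by omega))
    have hstep : (w n - w (n + 1)) * g (n + 1) ≤ 0 :=
      mul_nonpos_of_nonpos_of_nonneg (sub_nonpos.mpr (hw n n.lt_succ_self)) (hg _ le_rfl)
    rw [sum_range_succ]
    linarith

section hfact

variable {h t ν : ℝ}

theorem hfact_neg_pos (hh : 0 < h) (hν : 0 ≤ ν) (ht : 0 < t / h + 1) :
    0 < hfact h t (-ν) := by
  rw [hfact, sub_neg_eq_add]
  have := Real.Gamma_pos_of_pos ht
  have := Real.Gamma_pos_of_pos (add_pos_of_pos_of_nonneg ht hν)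
  have := Real.rpow_pos_of_pos hh (-ν)
  positivity

theorem hfact_neg_add_le (hh : 0 < h) (hν : 0 ≤ ν) (ht : 0 < t / h + 1) :
    hfact h (t + h) (-ν) ≤ hfact h t (-ν) := by
  have hx : (t + h) / h + 1 = t / h + 1 + 1 := by rw [add_div, div_self hh.ne']
  have hxν : 0 < t / h + 1 + ν := add_pos_of_pos_of_nonneg ht hν
  have hrec : hfact h (t + h) (-ν) = (t / h + 1) / (t / h + 1 + ν) * hfact h t (-ν) := by
    rw [hfact, hfact, hx, sub_neg_eq_add, sub_neg_eq_add, add_right_comm _ 1 ν,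
      Real.Gamma_add_one ht.ne', Real.Gamma_add_one hxν.ne']
    field_simp
  rw [hrec]
  refine mul_le_of_le_one_left (hfact_neg_pos hh hν ht).le ?_
  exact (div_le_one hxν).mpr (by linarith)

end hfact

section caputo

variable {h a ν : ℝ}

theorem caputoD_comp_le_mul {F : ℝ → ℝ} {D : ℝ} (hh : 0 < h) (hν0 : 0 ≤ ν)
    (hν1 : ν ≤ 1) (y : ℝ → ℝ) (k : ℕ)
    (hF : ∀ c, F (y (a + (k + 1) * h)) + D * (c - y (a + (k + 1) * h)) ≤ F c) :
    caputoD h a ν (fun t => F (y t)) k ≤ D * caputoD h a ν y k := by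
  set b := y (a + (k + 1) * h)
  set g : ℕ → ℝ := fun j => F (y (a + j * h)) - F b - D * (y (a + j * h) - b)
  have hg : ∀ j, 0 ≤ g j := fun j => by have := hF (y (a + j * h)); simp only [g]; linarith
  have hgk : g (k + 1) = 0 := by simp [g, b]
  have hfdiff : ∀ j : ℕ,
      fdiff h (fun t => F (y t)) (a + j * h)
        = D * fdiff h y (a + j * h) + (g (j + 1) - g j) / h := by
    intro j
    simp only [fdiff, g, Nat.cast_succ, add_one_mul, ← add_assoc]
    field_simp
    ring
  rcases hν1.lt_or_eq with hν | rfl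
  · simp only [caputoD, hν.ne, if_false]
    set w : ℕ → ℝ := fun j => hfact h (a + (1 - ν) * h + k * h - (a + j * h + h)) (-ν)
    have harg : ∀ j : ℕ,
        (a + (1 - ν) * h + k * h - (a + j * h + h)) / h + 1 = k - j + 1 - ν := fun j => by
      field_simp; ring
    have hw0 : 0 ≤ w 0 := (hfact_neg_pos hh hν0 (by rw [harg]; push_cast; linarith)).le
    have hw : ∀ j < k, w j ≤ w (j + 1) := by
      intro j hj
      have hjk : (j : ℝ) + 1 ≤ k := by exact_mod_cast hj
      have hshift : a + (1 - ν) * h + k * h - (a + j * h + h)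
          = a + (1 - ν) * h + k * h - (a + ((j + 1 : ℕ) : ℝ) * h + h) + h := by
        push_cast; ring
      simp only [w]
      rw [hshift]
      exact hfact_neg_add_le hh hν0 (by rw [harg]; push_cast; linarith)
    have hsum := sum_mul_sub_le_mul_of_monotone w g k hw0 hw fun j _ => hg j
    rw [hgk, mul_zero] at hsum
    have hsplit : ∑ j ∈ range (k + 1), w j * fdiff h (fun t => F (y t)) (a + j * h)
        = D * ∑ j ∈ range (k + 1), w j * fdiff h y (a + j * h)
          + (∑ j ∈ range (k + 1), w j * (g (j + 1) - g j)) / h := by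
      rw [mul_sum, sum_div, ← sum_add_distrib]
      refine sum_congr rfl fun j _ => ?_
      rw [hfdiff]
      ring
    have hC : 0 ≤ h / Real.Gamma (1 - ν) :=
      div_nonneg hh.le (Real.Gamma_pos_of_pos (by linarith)).le
    rw [hsplit, mul_add, mul_left_comm]
    exact add_le_of_nonpos_right
      (mul_nonpos_of_nonneg_of_nonpos hC (div_nonpos_of_nonpos_of_nonneg hsum hh.le))
  · simp only [caputoD, if_true]
    rw [hfdiff, hgk, zero_sub, neg_div, ← sub_eq_add_neg, sub_le_self_iff]
    exact div_nonneg (hg k) hh.le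

end caputo

theorem stmt13 (h a ν : ℝ) (hh : 0 < h) (hν0 : 0 < ν) (hν1 : ν ≤ 1)
    (y : ℝ → ℝ) (m : ℕ) (hm : 1 ≤ m) :
    ∀ k : ℕ, caputoD h a ν (fun t => y t ^ (2 ^ m)) k
      ≤ (2 : ℝ) ^ m * y (a + ((k : ℝ) + 1) * h) ^ (2 ^ m - 1) * caputoD h a ν y k := by
  intro k
  have heven : Even (2 ^ m) := Nat.even_pow.mpr ⟨even_two, by omega⟩
  refine caputoD_comp_le_mul (F := fun x => x ^ 2 ^ m) hh hν0.le hν1 y k fun c => ?_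
  exact_mod_cast heven.convexOn_pow.add_mul_sub_le_of_hasDerivAt
    (hasDerivAt_pow _ (y (a + (k + 1) * h))) c
end
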